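/- arXiv:1502.06868 — 13 statements merged into one kernel-verified Lean document; each statement's English description precedes it below -/
import Mathlib

section
/- Let (X, F) be a measurable space, μ : F → Y a monotone measure, and ∘ : Y × Y → Y a nondecreasing binary operation. Let s ≥ 1 and suppose that a^s ∘ b ≥ (a ∘ b)^s for all a, b ∈ Y. Then for every measurable function f : X → Y and every A ∈ F, the Jensen type inequality ∫_A f^s ∘ μ ≥ (∫_A f ∘ μ)^s holds. -/
open scoped ENNReal

/-- The generalized Sugeno integral of `f` on `A` with respect to the monotone
measure `μ` and the binary operation `op`, where the value scale is the set
`Y ⊆ [0,∞]` (either `[0,1]` or `[0,∞]`):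
`∫_A f ∘ μ = sup_{α ∈ Y} (α ∘ μ(A ∩ {f ≥ α}))`. -/
noncomputable def sugenoGen {X : Type*} (Y : Set ℝ≥0∞) (op : ℝ≥0∞ → ℝ≥0∞ → ℝ≥0∞)
    (μ : Set X → ℝ≥0∞) (f : X → ℝ≥0∞) (A : Set X) : ℝ≥0∞ :=
  ⨆ α ∈ Y, op α (μ (A ∩ {x | α ≤ f x}))

section SugenoGen

variable {X : Type*} {Y : Set ℝ≥0∞} {op : ℝ≥0∞ → ℝ≥0∞ → ℝ≥0∞} {μ : Set X → ℝ≥0∞}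
  {f : X → ℝ≥0∞} {A : Set X}

theorem le_sugenoGen {α : ℝ≥0∞} (hα : α ∈ Y) :
    op α (μ (A ∩ {x | α ≤ f x})) ≤ sugenoGen Y op μ f A :=
  le_biSup (fun β => op β (μ (A ∩ {x | β ≤ f x}))) hα

theorem sugenoGen_rpow_le_iff {s : ℝ} (hs : 0 < s) {c : ℝ≥0∞} :
    sugenoGen Y op μ f A ^ s ≤ c ↔ ∀ α ∈ Y, op α (μ (A ∩ {x | α ≤ f x})) ^ s ≤ c := by
  simp only [sugenoGen, ← ENNReal.le_rpow_inv_iff hs, iSup₂_le_iff]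

end SugenoGen

theorem ENNReal.rpow_mem_of_eq_Icc_or_univ {Y : Set ℝ≥0∞} (hY : Y = Set.Icc 0 1 ∨ Y = Set.univ)
    {s : ℝ} (hs : 0 ≤ s) {α : ℝ≥0∞} (hα : α ∈ Y) : α ^ s ∈ Y := by
  rcases hY with rfl | rfl
  · exact ⟨zero_le, ENNReal.rpow_le_one hα.2 hs⟩
  · trivial

theorem measure_inter_setOf_le_rpow_le {X : Type*} [MeasurableSpace X] {μ : Set X → ℝ≥0∞}
    (hμmono : ∀ A B : Set X, MeasurableSet A → MeasurableSet B → A ⊆ B → μ A ≤ μ B)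
    {f : X → ℝ≥0∞} (hf : Measurable f) {A : Set X} (hA : MeasurableSet A)
    {s : ℝ} (hs : 0 ≤ s) (α : ℝ≥0∞) :
    μ (A ∩ {x | α ≤ f x}) ≤ μ (A ∩ {x | α ^ s ≤ f x ^ s}) :=
  hμmono _ _ (hA.inter (measurableSet_le measurable_const hf))
    (hA.inter (measurableSet_le measurable_const (hf.pow_const s)))
    (Set.inter_subset_inter_right A fun _ hx => ENNReal.rpow_le_rpow hx hs)

theorem jensen_type_sugenoGen_general {X : Type*} [MeasurableSpace X]
    -- the value scale Y is [0,1] or [0,∞]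
    (Y : Set ℝ≥0∞) (hY : Y = Set.Icc 0 1 ∨ Y = Set.univ)
    -- μ : F → Y is a monotone measure
    (μ : Set X → ℝ≥0∞)
    (hμY : ∀ A : Set X, MeasurableSet A → μ A ∈ Y)
    (hμmono : ∀ A B : Set X, MeasurableSet A → MeasurableSet B → A ⊆ B → μ A ≤ μ B)
    -- ∘ : Y × Y → Y is a nondecreasing binary operation
    (op : ℝ≥0∞ → ℝ≥0∞ → ℝ≥0∞)
    (hopmono : ∀ a b c d : ℝ≥0∞, b ≤ a → d ≤ c → op b d ≤ op a c)
    -- s ≥ 1 and a^s ∘ b ≥ (a ∘ b)^s for all a, b ∈ Y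
    (s : ℝ) (hs : 1 ≤ s)
    (hpow : ∀ a ∈ Y, ∀ b ∈ Y, (op a b) ^ s ≤ op (a ^ s) b)
    -- f : X → Y measurable, A ∈ F
    (f : X → ℝ≥0∞) (hf : Measurable f)
    (A : Set X) (hA : MeasurableSet A) :
    (sugenoGen Y op μ f A) ^ s ≤ sugenoGen Y op μ (fun x => f x ^ s) A := by
  have hs0 : 0 < s := zero_lt_one.trans_le hs
  refine (sugenoGen_rpow_le_iff hs0).2 fun α hα => ?_
  have hlevel : μ (A ∩ {x | α ≤ f x}) ∈ Y :=
    hμY _ (hA.inter (measurableSet_le measurable_const hf))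
  calc op α (μ (A ∩ {x | α ≤ f x})) ^ s
      ≤ op (α ^ s) (μ (A ∩ {x | α ≤ f x})) := hpow α hα _ hlevel
    _ ≤ op (α ^ s) (μ (A ∩ {x | α ^ s ≤ f x ^ s})) :=
        hopmono _ _ _ _ le_rfl (measure_inter_setOf_le_rpow_le hμmono hf hA hs0.le α)
    _ ≤ sugenoGen Y op μ (fun x => f x ^ s) A :=
        le_sugenoGen (ENNReal.rpow_mem_of_eq_Icc_or_univ hY hs0.le hα)

/-- Jensen type inequality for the generalized Sugeno integral:
if `s ≥ 1` and `a^s ∘ b ≥ (a ∘ b)^s` for all `a, b ∈ Y`, then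
`∫_A f^s ∘ μ ≥ (∫_A f ∘ μ)^s`. -/
theorem jensen_type_sugenoGen {X : Type*} [MeasurableSpace X]
    -- the value scale Y is [0,1] or [0,∞]
    (Y : Set ℝ≥0∞) (hY : Y = Set.Icc 0 1 ∨ Y = Set.univ)
    -- μ : F → Y is a monotone measure
    (μ : Set X → ℝ≥0∞)
    (hμY : ∀ A : Set X, MeasurableSet A → μ A ∈ Y)
    (hμ0 : μ ∅ = 0) (hμX : 0 < μ Set.univ)
    (hμmono : ∀ A B : Set X, MeasurableSet A → MeasurableSet B → A ⊆ B → μ A ≤ μ B)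
    -- ∘ : Y × Y → Y is a nondecreasing binary operation
    (op : ℝ≥0∞ → ℝ≥0∞ → ℝ≥0∞)
    (hopY : ∀ a ∈ Y, ∀ b ∈ Y, op a b ∈ Y)
    (hopmono : ∀ a b c d : ℝ≥0∞, b ≤ a → d ≤ c → op b d ≤ op a c)
    -- s ≥ 1 and a^s ∘ b ≥ (a ∘ b)^s for all a, b ∈ Y
    (s : ℝ) (hs : 1 ≤ s)
    (hpow : ∀ a ∈ Y, ∀ b ∈ Y, (op a b) ^ s ≤ op (a ^ s) b)
    -- f : X → Y measurable, A ∈ F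
    (f : X → ℝ≥0∞) (hf : Measurable f) (hfY : ∀ x, f x ∈ Y)
    (A : Set X) (hA : MeasurableSet A) :
    (sugenoGen Y op μ f A) ^ s ≤ sugenoGen Y op μ (fun x => f x ^ s) A :=
  jensen_type_sugenoGen_general Y hY μ hμY hμmono op hopmono s hs hpow f hf A hA
end

section
/- Let (X, F) be a measurable space, μ : F → [0,∞] a monotone measure, f : X → [0,∞] a measurable function, A ∈ F and s ≥ 1. If the Sugeno integral of f on A satisfies (S)∫_A f dμ ≤ 1, then (S)∫_A f^s dμ ≥ ((S)∫_A f dμ)^s. -/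
open scoped ENNReal

/-- The Sugeno integral of `f` on `A` with respect to the monotone measure `μ`:
`(S)∫_A f dμ = sup_{α ∈ [0,∞]} min(α, μ(A ∩ {f ≥ α}))`. -/
noncomputable def sugeno {X : Type*} (μ : Set X → ℝ≥0∞) (f : X → ℝ≥0∞)
    (A : Set X) : ℝ≥0∞ :=
  ⨆ α : ℝ≥0∞, min α (μ (A ∩ {x | α ≤ f x}))

/-- Jensen type inequality for the Sugeno integral: if `s ≥ 1` and
`(S)∫_A f dμ ≤ 1`, then `(S)∫_A f^s dμ ≥ ((S)∫_A f dμ)^s`. -/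
theorem jensen_type_sugeno {X : Type*} [MeasurableSpace X]
    (μ : Set X → ℝ≥0∞)
    (hμ0 : μ ∅ = 0) (hμX : 0 < μ Set.univ)
    (hμmono : ∀ A B : Set X, MeasurableSet A → MeasurableSet B → A ⊆ B → μ A ≤ μ B)
    (f : X → ℝ≥0∞) (hf : Measurable f)
    (A : Set X) (hA : MeasurableSet A)
    (s : ℝ) (hs : 1 ≤ s)
    (hle : sugeno μ f A ≤ 1) :
    (sugeno μ f A) ^ s ≤ sugeno μ (fun x => f x ^ s) A := by
  have hs0 : 0 < s := lt_of_lt_of_le one_pos hs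
  set T := sugeno μ (fun x => f x ^ s) A with hT
  have key : ∀ α : ℝ≥0∞, min α (μ (A ∩ {x | α ≤ f x})) ≤ T ^ (1 / s) := by
    intro α
    set m := μ (A ∩ {x | α ≤ f x}) with hm
    have hle1 : min α m ≤ 1 := by
      refine le_trans ?_ hle
      exact le_iSup (fun β : ℝ≥0∞ => min β (μ (A ∩ {x | β ≤ f x}))) α
    have hset : {x | α ^ s ≤ f x ^ s} = {x | α ≤ f x} := by
      ext x; simp [ENNReal.rpow_le_rpow_iff hs0]
    have h1 : min (α ^ s) m ≤ T := by
      have := le_iSup (fun β : ℝ≥0∞ => min β (μ (A ∩ {x | β ≤ f x ^ s}))) (α ^ s)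
      simpa [hT, sugeno, hset, hm] using this
    have hstep : (min α m) ^ s ≤ T := by
      refine le_trans ?_ h1
      rcases le_total α m with h | h
      · rw [min_eq_left h]
        have hα1 : α ≤ 1 := by rwa [min_eq_left h] at hle1
        refine le_min le_rfl ?_
        calc α ^ s ≤ α ^ (1 : ℝ) := ENNReal.rpow_le_rpow_of_exponent_ge hα1 hs
          _ = α := ENNReal.rpow_one α
          _ ≤ m := h
      · rw [min_eq_right h]
        have hm1 : m ≤ 1 := by rwa [min_eq_right h] at hle1
        refine le_min (ENNReal.rpow_le_rpow h hs0.le) ?_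
        calc m ^ s ≤ m ^ (1 : ℝ) := ENNReal.rpow_le_rpow_of_exponent_ge hm1 hs
          _ = m := ENNReal.rpow_one m
    calc min α m = ((min α m) ^ s) ^ (1 / s) := by
          rw [← ENNReal.rpow_mul, mul_one_div, div_self hs0.ne', ENNReal.rpow_one]
      _ ≤ T ^ (1 / s) := ENNReal.rpow_le_rpow hstep (by positivity)
  have h2 : sugeno μ f A ≤ T ^ (1 / s) := by
    rw [sugeno]; exact iSup_le key
  calc sugeno μ f A ^ s ≤ (T ^ (1 / s)) ^ s := ENNReal.rpow_le_rpow h2 hs0.le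
    _ = T := by rw [← ENNReal.rpow_mul, one_div, inv_mul_cancel₀ hs0.ne', ENNReal.rpow_one]
end

section
/- Let μ be the Lebesgue measure restricted to [0,1] and let f : [0,1] → [0,∞) be a nondecreasing Borel measurable function. Then (S)∫_{[0,1]} f dμ ≤ √2 · ((S)∫_{[0,1]} f² dμ)^{1/4} · ((S)∫_{[0,1]} x² f(x)² dμ)^{1/4}. -/
/-!
For `t` below the Sugeno integral of `f` there is a level `α > t` whose superlevel set has measure
greater than `t`. Since `f` is nondecreasing, that superlevel set contains `(1 - t, 1]`. Hence
`f² ≥ α²` on a set of measure `> t ≥ t²`, and `x² f(x)² ≥ t²/4` on `(1 - t/2, 1]`, a set of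
measure `t/2 ≥ t²/4`. So the two integrals on the right are at least `t²` and `t²/4`, and
`√2 (t²)^{1/4} (t²/4)^{1/4} = t`.
-/

open scoped ENNReal

open MeasureTheory Set

section Sugeno

variable {X : Type*} {μ : Set X → ℝ≥0∞} {f : X → ℝ≥0∞} {A : Set X} {t α : ℝ≥0∞}

theorem sugeno_inter_self (μ : Set X → ℝ≥0∞) (f : X → ℝ≥0∞) (A : Set X) :
    sugeno (fun B => μ (B ∩ A)) f A = sugeno μ f A := by
  simp only [sugeno, inter_comm _ A, ← inter_assoc, inter_self]

theorem lt_sugeno_iff : t < sugeno μ f A ↔ ∃ α, t < α ∧ t < μ (A ∩ {x | α ≤ f x}) := by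
  simp only [sugeno, lt_iSup_iff, lt_min_iff]

theorem le_sugeno (htα : t ≤ α) (htμ : t ≤ μ (A ∩ {x | α ≤ f x})) : t ≤ sugeno μ f A :=
  (le_min htα htμ).trans (le_iSup (fun α => min α (μ (A ∩ {x | α ≤ f x}))) α)

theorem sugeno_le_apply (hμ : Monotone μ) : sugeno μ f A ≤ μ A :=
  iSup_le fun _ => (min_le_right _ _).trans (hμ inter_subset_left)

theorem sq_le_sugeno_sq (ht : t < sugeno μ f A) (ht1 : t ≤ 1) :
    t ^ 2 ≤ sugeno μ (fun x => f x ^ 2) A := by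
  obtain ⟨α, htα, htμ⟩ := lt_sugeno_iff.1 ht
  refine le_sugeno (α := α ^ 2) (by gcongr) ?_
  simp only [ENNReal.pow_le_pow_left_iff two_ne_zero]
  calc t ^ 2 ≤ t := by simpa [sq] using mul_le_of_le_one_left' ht1
    _ ≤ _ := htμ.le

end Sugeno

theorem MonotoneOn.le_of_ofReal_sub_lt_volume {f : ℝ → ℝ≥0∞} {a b x : ℝ} {α : ℝ≥0∞}
    (hf : MonotoneOn f (Icc a b)) (hx : x ∈ Icc a b)
    (h : ENNReal.ofReal (b - x) < volume (Icc a b ∩ {y | α ≤ f y})) : α ≤ f x := by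
  by_contra! hfx
  have hsub : Icc a b ∩ {y | α ≤ f y} ⊆ Ioc x b := fun y ⟨hy, hαy⟩ =>
    ⟨not_le.1 fun hyx => lt_irrefl _ (hfx.trans_le (hαy.trans (hf hy hx hyx))), hy.2⟩
  exact h.not_ge ((measure_mono hsub).trans_eq Real.volume_Ioc)

theorem sq_div_four_le_sugeno_sq_mul_sq {f : ℝ → ℝ≥0∞} {t : ℝ≥0∞}
    (hf : MonotoneOn f (Icc 0 1)) (ht : t < sugeno volume f (Icc 0 1)) (ht1 : t ≤ 1) :
    t ^ 2 / 4 ≤ sugeno volume (fun x => ENNReal.ofReal x ^ 2 * f x ^ 2) (Icc 0 1) := by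
  obtain ⟨α, htα, htμ⟩ := lt_sugeno_iff.1 ht
  obtain ⟨r, hr0, rfl⟩ : ∃ r : ℝ, 0 ≤ r ∧ ENNReal.ofReal r = t :=
    ⟨t.toReal, ENNReal.toReal_nonneg, ENNReal.ofReal_toReal (ht1.trans_lt ENNReal.one_lt_top).ne⟩
  have hr1 : r ≤ 1 := by simpa using ht1
  have hsq : ENNReal.ofReal r ^ 2 / 4 = ENNReal.ofReal (r ^ 2 / 4) := by
    rw [ENNReal.ofReal_div_of_pos four_pos, ENNReal.ofReal_pow hr0, ENNReal.ofReal_ofNat]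
  have hsub : Ioc (1 - r / 2) 1 ⊆
      Icc 0 1 ∩ {x | ENNReal.ofReal r ^ 2 / 4 ≤ ENNReal.ofReal x ^ 2 * f x ^ 2} := by
    rintro x ⟨hx1, hx2⟩
    have hx : x ∈ Icc (0:ℝ) 1 := ⟨by linarith, hx2⟩
    have hαx : α ≤ f x := hf.le_of_ofReal_sub_lt_volume hx <|
      (ENNReal.ofReal_lt_ofReal_iff'.2 ⟨by linarith, by linarith⟩).trans htμ
    refine ⟨hx, ?_⟩
    calc ENNReal.ofReal r ^ 2 / 4 = (ENNReal.ofReal (1 / 2) * ENNReal.ofReal r) ^ 2 := by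
          rw [hsq, ← ENNReal.ofReal_mul (by norm_num), ← ENNReal.ofReal_pow (by positivity)]
          ring_nf
      _ ≤ (ENNReal.ofReal x * f x) ^ 2 := by
          gcongr
          · linarith
          · exact htα.le.trans hαx
      _ = ENNReal.ofReal x ^ 2 * f x ^ 2 := mul_pow _ _ _
  refine le_sugeno le_rfl ?_
  calc ENNReal.ofReal r ^ 2 / 4 ≤ ENNReal.ofReal (r / 2) := by
        rw [hsq]; exact ENNReal.ofReal_le_ofReal (by nlinarith)
    _ = volume (Ioc (1 - r / 2) 1) := by rw [Real.volume_Ioc, sub_sub_cancel]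
    _ ≤ _ := measure_mono hsub

theorem ofReal_sqrt_two_mul_rpow_mul_rpow (t : ℝ≥0∞) :
    ENNReal.ofReal √2 * (t ^ 2) ^ ((1:ℝ)/4) * (t ^ 2 / 4) ^ ((1:ℝ)/4) = t := by
  have h4 : (t ^ 2) * (t ^ 2 / 4) = 4⁻¹ * t ^ 4 := by rw [div_eq_mul_inv]; ring
  have hc : ENNReal.ofReal √2 * (4⁻¹ : ℝ≥0∞) ^ ((1:ℝ)/4) = 1 := by
    have h : √2 = (4:ℝ) ^ ((1:ℝ)/4) := by
      rw [Real.sqrt_eq_rpow, show (4:ℝ) = 2 ^ (2:ℝ) by norm_num, ← Real.rpow_mul zero_le_two]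
      norm_num
    rw [h, ← ENNReal.ofReal_rpow_of_nonneg (by norm_num) (by norm_num), ENNReal.ofReal_ofNat,
      ← ENNReal.mul_rpow_of_nonneg _ _ (by norm_num),
      ENNReal.mul_inv_cancel (by norm_num) (by norm_num), ENNReal.one_rpow]
  rw [mul_assoc, ← ENNReal.mul_rpow_of_nonneg _ _ (by norm_num), h4,
    ENNReal.mul_rpow_of_nonneg _ _ (by norm_num), ← mul_assoc, hc, one_mul, one_div]
  exact_mod_cast ENNReal.pow_rpow_inv_natCast four_ne_zero t

theorem carlson_sugeno_lebesgue_general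
    -- μ is the Lebesgue measure restricted to [0,1]
    (μ : Set ℝ → ℝ≥0∞)
    (hμ : ∀ B : Set ℝ, μ B = MeasureTheory.volume (B ∩ Set.Icc (0:ℝ) 1))
    -- f : [0,1] → [0,∞) is a nondecreasing Borel measurable function
    (f : ℝ → ℝ≥0∞)
    (hmono : MonotoneOn f (Set.Icc (0:ℝ) 1)) :
    sugeno μ f (Set.Icc 0 1) ≤
      ENNReal.ofReal (Real.sqrt 2) *
        (sugeno μ (fun x => f x ^ 2) (Set.Icc 0 1)) ^ ((1:ℝ)/4) *
        (sugeno μ (fun x => ENNReal.ofReal x ^ 2 * f x ^ 2) (Set.Icc 0 1)) ^ ((1:ℝ)/4) := by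
  obtain rfl : μ = fun B => volume (B ∩ Icc 0 1) := funext hμ
  simp only [sugeno_inter_self]
  refine le_of_forall_lt_imp_le_of_dense fun t ht => ?_
  have ht1 : t ≤ 1 := ht.le.trans <| (sugeno_le_apply fun _ _ => measure_mono).trans (by simp)
  calc t = ENNReal.ofReal √2 * (t ^ 2) ^ ((1:ℝ)/4) * (t ^ 2 / 4) ^ ((1:ℝ)/4) :=
        (ofReal_sqrt_two_mul_rpow_mul_rpow t).symm
    _ ≤ _ := by
      gcongr
      · exact sq_le_sugeno_sq ht ht1
      · exact sq_div_four_le_sugeno_sq_mul_sq hmono ht ht1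

/-- Carlson type inequality for the Sugeno integral with respect to the
Lebesgue measure restricted to `[0,1]`, for a nondecreasing function `f`:
`(S)∫_{[0,1]} f dμ ≤ √2 ((S)∫_{[0,1]} f² dμ)^{1/4} ((S)∫_{[0,1]} x²f(x)² dμ)^{1/4}`. -/
theorem carlson_sugeno_lebesgue
    -- μ is the Lebesgue measure restricted to [0,1]
    (μ : Set ℝ → ℝ≥0∞)
    (hμ : ∀ B : Set ℝ, μ B = MeasureTheory.volume (B ∩ Set.Icc (0:ℝ) 1))
    -- f : [0,1] → [0,∞) is a nondecreasing Borel measurable function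
    (f : ℝ → ℝ≥0∞) (hf : Measurable f)
    (hmono : MonotoneOn f (Set.Icc (0:ℝ) 1))
    (hfin : ∀ x ∈ Set.Icc (0:ℝ) 1, f x ≠ ∞) :
    sugeno μ f (Set.Icc 0 1) ≤
      ENNReal.ofReal (Real.sqrt 2) *
        (sugeno μ (fun x => f x ^ 2) (Set.Icc 0 1)) ^ ((1:ℝ)/4) *
        (sugeno μ (fun x => ENNReal.ofReal x ^ 2 * f x ^ 2) (Set.Icc 0 1)) ^ ((1:ℝ)/4) :=
  carlson_sugeno_lebesgue_general μ hμ f hmono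
end

section
/- Let (X, F) be a measurable space, μ : F → [0,1] a monotone measure, p, q ≥ 1, and let f, g, h : X → [0,1] be measurable functions such that f, g are comonotone and f, h are comonotone. Then for every A ∈ F, ((S)∫_A f dμ)² · ((S)∫_A g dμ) · ((S)∫_A h dμ) ≤ ((S)∫_A f^p g^p dμ)^{1/p} · ((S)∫_A f^q h^q dμ)^{1/q}. -/
/-!
If `s < (S)∫_A f dμ` then `μ (A ∩ {f ≥ s}) > s`. For comonotone `f, g` the level sets
`{f ≥ s}` and `{g ≥ t}` are nested, so their intersection with `A` still has measure at least
`min s t ≥ s t ≥ (s t)^p`, and on it `f^p g^p ≥ (s t)^p`; hence `(s t)^p ≤ (S)∫_A f^p g^p dμ`.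
Letting `s, t` increase to the two integrals gives
`(S)∫_A f dμ · (S)∫_A g dμ ≤ ((S)∫_A f^p g^p dμ)^{1/p}`, and the theorem is the product of this
inequality for `(f, g, p)` and for `(f, h, q)`.
-/

/-- The Sugeno integral of a `[0,1]`-valued function `f` on `A` with respect to
a `[0,1]`-valued monotone measure `μ`:
`(S)∫_A f dμ = sup_{α ∈ [0,1]} min(α, μ(A ∩ {f ≥ α}))`. -/
noncomputable def sugeno01 {X : Type*} (μ : Set X → ℝ) (f : X → ℝ)
    (A : Set X) : ℝ :=
  ⨆ α : Set.Icc (0:ℝ) 1, min α.1 (μ (A ∩ {x | α.1 ≤ f x}))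

theorem Monovary.setOf_le_subset_or_subset {ι α β : Type*} [LinearOrder α] [LinearOrder β]
    {f : ι → α} {g : ι → β} (hfg : Monovary f g) (s : α) (t : β) :
    {x | s ≤ f x} ⊆ {x | t ≤ g x} ∨ {x | t ≤ g x} ⊆ {x | s ≤ f x} := by
  by_contra! hcon
  obtain ⟨x, hfx, hgx⟩ := Set.not_subset.mp hcon.1
  obtain ⟨y, hgy, hfy⟩ := Set.not_subset.mp hcon.2
  exact ((not_le.1 hfy).trans_le hfx).not_ge (hfg ((not_le.1 hgx).trans_le hgy))

section Sugeno01

variable {X : Type*} (μ : Set X → ℝ) (f : X → ℝ) (A : Set X)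

theorem bddAbove_sugeno01_range :
    BddAbove (Set.range fun α : Set.Icc (0:ℝ) 1 => min α.1 (μ (A ∩ {x | α.1 ≤ f x}))) :=
  ⟨1, by rintro _ ⟨α, rfl⟩; exact (min_le_left _ _).trans α.2.2⟩

theorem sugeno01_le_one : sugeno01 μ f A ≤ 1 :=
  ciSup_le fun α => (min_le_left _ _).trans α.2.2

theorem le_sugeno01 {α : ℝ} (hα : α ∈ Set.Icc (0:ℝ) 1) (hμα : α ≤ μ (A ∩ {x | α ≤ f x})) :
    α ≤ sugeno01 μ f A := by
  have := le_ciSup (bddAbove_sugeno01_range μ f A) ⟨α, hα⟩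
  rwa [min_eq_left hμα] at this

variable [MeasurableSpace X] {μ f A}

theorem sugeno01_nonneg (hμ : ∀ B, MeasurableSet B → 0 ≤ μ B) (hf : Measurable f)
    (hA : MeasurableSet A) : 0 ≤ sugeno01 μ f A :=
  le_sugeno01 μ f A ⟨le_rfl, zero_le_one⟩ (hμ _ (hA.inter (hf measurableSet_Ici)))

variable (hμmono : ∀ B C : Set X, MeasurableSet B → MeasurableSet C → B ⊆ C → μ B ≤ μ C)
include hμmono

theorem lt_measure_of_lt_sugeno01 (hf : Measurable f) (hA : MeasurableSet A) {t : ℝ}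
    (ht : t < sugeno01 μ f A) : t < μ (A ∩ {x | t ≤ f x}) := by
  obtain ⟨α, hα⟩ := (lt_ciSup_iff (bddAbove_sugeno01_range μ f A)).1 ht
  rw [lt_min_iff] at hα
  have hmeas (β : ℝ) : MeasurableSet (A ∩ {x | β ≤ f x}) := hA.inter (hf measurableSet_Ici)
  exact hα.2.trans_le <| hμmono _ _ (hmeas _) (hmeas _) <|
    Set.inter_subset_inter_right _ fun x hx => hα.1.le.trans hx

variable {g : X → ℝ} (hf : Measurable f) (hg : Measurable g) (hA : MeasurableSet A)
include hf hg hA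

theorem min_lt_measure_inter_of_monovary (hfg : Monovary f g) {s t : ℝ}
    (hs : s < sugeno01 μ f A) (ht : t < sugeno01 μ g A) :
    min s t < μ (A ∩ ({x | s ≤ f x} ∩ {x | t ≤ g x})) := by
  rcases hfg.setOf_le_subset_or_subset s t with hsub | hsub
  · rw [Set.inter_eq_left.mpr hsub]
    exact (min_le_left _ _).trans_lt (lt_measure_of_lt_sugeno01 hμmono hf hA hs)
  · rw [Set.inter_eq_right.mpr hsub]
    exact (min_le_right _ _).trans_lt (lt_measure_of_lt_sugeno01 hμmono hg hA ht)

variable {p : ℝ} (hp : 1 ≤ p) (hfg : Monovary f g) (hf0 : ∀ x, 0 ≤ f x) (hg0 : ∀ x, 0 ≤ g x)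
include hp hfg hf0 hg0

theorem rpow_mul_le_sugeno01 {s t : ℝ} (hs0 : 0 ≤ s) (ht0 : 0 ≤ t)
    (hs : s < sugeno01 μ f A) (ht : t < sugeno01 μ g A) :
    (s * t) ^ p ≤ sugeno01 μ (fun x => f x ^ p * g x ^ p) A := by
  have hs1 : s ≤ 1 := hs.le.trans (sugeno01_le_one μ f A)
  have ht1 : t ≤ 1 := ht.le.trans (sugeno01_le_one μ g A)
  have hst0 : 0 ≤ s * t := mul_nonneg hs0 ht0
  have hst1 : s * t ≤ 1 := mul_le_one₀ hs1 ht0 ht1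
  have hst_min : (s * t) ^ p ≤ min s t :=
    (Real.rpow_le_self_of_le_one hst0 hst1 hp).trans
      (le_min (mul_le_of_le_one_right hs0 ht1) (mul_le_of_le_one_left ht0 hs1))
  have hlevel : A ∩ ({x | s ≤ f x} ∩ {x | t ≤ g x}) ⊆
      A ∩ {x | (s * t) ^ p ≤ f x ^ p * g x ^ p} := by
    rintro x ⟨hxA, hsx, htx⟩
    refine ⟨hxA, ?_⟩
    calc (s * t) ^ p ≤ (f x * g x) ^ p :=
          Real.rpow_le_rpow hst0 (mul_le_mul hsx htx ht0 (hf0 x)) (by linarith)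
      _ = f x ^ p * g x ^ p := Real.mul_rpow (hf0 x) (hg0 x)
  refine le_sugeno01 μ _ A ⟨Real.rpow_nonneg hst0 p, Real.rpow_le_one hst0 hst1 (by linarith)⟩ ?_
  refine hst_min.trans <| (min_lt_measure_inter_of_monovary hμmono hf hg hA hfg hs ht).le.trans ?_
  exact hμmono _ _ (hA.inter ((hf measurableSet_Ici).inter (hg measurableSet_Ici)))
    (hA.inter (measurableSet_le measurable_const ((hf.pow_const p).mul (hg.pow_const p)))) hlevel

theorem sugeno01_mul_le_rpow (hμ : ∀ B, MeasurableSet B → 0 ≤ μ B) :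
    sugeno01 μ f A * sugeno01 μ g A ≤ sugeno01 μ (fun x => f x ^ p * g x ^ p) A ^ (1 / p) := by
  have hp0 : 0 < p := by linarith
  have hK : 0 ≤ sugeno01 μ (fun x => f x ^ p * g x ^ p) A :=
    sugeno01_nonneg hμ ((hf.pow_const p).mul (hg.pow_const p)) hA
  refine mul_le_of_forall_lt_of_nonneg (sugeno01_nonneg hμ hf hA) (Real.rpow_nonneg hK _)
    fun s hs0 hs t ht0 ht => ?_
  rw [one_div, Real.le_rpow_inv_iff_of_pos (mul_nonneg hs0 ht0) hK hp0]
  exact rpow_mul_le_sugeno01 hμmono hf hg hA hp hfg hf0 hg0 hs0 ht0 hs ht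

end Sugeno01

theorem carlson_xu_ouyang_general {X : Type*} [MeasurableSpace X]
    -- μ : F → [0,1] is a monotone measure
    (μ : Set X → ℝ)
    (hμY : ∀ A : Set X, MeasurableSet A → μ A ∈ Set.Icc (0:ℝ) 1)
    (hμmono : ∀ A B : Set X, MeasurableSet A → MeasurableSet B → A ⊆ B → μ A ≤ μ B)
    -- p, q ≥ 1
    (p q : ℝ) (hp : 1 ≤ p) (hq : 1 ≤ q)
    -- f, g, h : X → [0,1] measurable
    (f g h : X → ℝ) (hf : Measurable f) (hg : Measurable g) (hh : Measurable h)
    (hfY : ∀ x, f x ∈ Set.Icc (0:ℝ) 1) (hgY : ∀ x, g x ∈ Set.Icc (0:ℝ) 1)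
    (hhY : ∀ x, h x ∈ Set.Icc (0:ℝ) 1)
    -- f, g comonotone and f, h comonotone
    (hfg : ∀ x y, 0 ≤ (f x - f y) * (g x - g y))
    (hfh : ∀ x y, 0 ≤ (f x - f y) * (h x - h y))
    (A : Set X) (hA : MeasurableSet A) :
    (sugeno01 μ f A) ^ 2 * sugeno01 μ g A * sugeno01 μ h A ≤
      (sugeno01 μ (fun x => f x ^ p * g x ^ p) A) ^ (1/p) *
      (sugeno01 μ (fun x => f x ^ q * h x ^ q) A) ^ (1/q) := by
  have hμ B hB : 0 ≤ μ B := (hμY B hB).1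
  have hf0 x : 0 ≤ f x := (hfY x).1
  have hfg' : Monovary f g := monovary_iff_forall_mul_nonneg.2 fun x y => hfg y x
  have hfh' : Monovary f h := monovary_iff_forall_mul_nonneg.2 fun x y => hfh y x
  have hfg_le := sugeno01_mul_le_rpow hμmono hf hg hA hp hfg' hf0 (fun x => (hgY x).1) hμ
  have hfh_le := sugeno01_mul_le_rpow hμmono hf hh hA hq hfh' hf0 (fun x => (hhY x).1) hμ
  have hfg_nonneg : 0 ≤ sugeno01 μ f A * sugeno01 μ g A :=
    mul_nonneg (sugeno01_nonneg hμ hf hA) (sugeno01_nonneg hμ hg hA)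
  have hfh_nonneg : 0 ≤ sugeno01 μ f A * sugeno01 μ h A :=
    mul_nonneg (sugeno01_nonneg hμ hf hA) (sugeno01_nonneg hμ hh hA)
  calc (sugeno01 μ f A) ^ 2 * sugeno01 μ g A * sugeno01 μ h A
      = (sugeno01 μ f A * sugeno01 μ g A) * (sugeno01 μ f A * sugeno01 μ h A) := by ring
    _ ≤ _ := mul_le_mul hfg_le hfh_le hfh_nonneg (hfg_nonneg.trans hfg_le)

/-- Carlson type inequality (Xu–Ouyang) for the Sugeno integral of comonotone
functions: `((S)∫_A f dμ)² ((S)∫_A g dμ) ((S)∫_A h dμ) ≤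
((S)∫_A f^p g^p dμ)^{1/p} ((S)∫_A f^q h^q dμ)^{1/q}`. -/
theorem carlson_xu_ouyang {X : Type*} [MeasurableSpace X]
    -- μ : F → [0,1] is a monotone measure
    (μ : Set X → ℝ)
    (hμY : ∀ A : Set X, MeasurableSet A → μ A ∈ Set.Icc (0:ℝ) 1)
    (hμ0 : μ ∅ = 0) (hμX : 0 < μ Set.univ)
    (hμmono : ∀ A B : Set X, MeasurableSet A → MeasurableSet B → A ⊆ B → μ A ≤ μ B)
    -- p, q ≥ 1
    (p q : ℝ) (hp : 1 ≤ p) (hq : 1 ≤ q)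
    -- f, g, h : X → [0,1] measurable
    (f g h : X → ℝ) (hf : Measurable f) (hg : Measurable g) (hh : Measurable h)
    (hfY : ∀ x, f x ∈ Set.Icc (0:ℝ) 1) (hgY : ∀ x, g x ∈ Set.Icc (0:ℝ) 1)
    (hhY : ∀ x, h x ∈ Set.Icc (0:ℝ) 1)
    -- f, g comonotone and f, h comonotone
    (hfg : ∀ x y, 0 ≤ (f x - f y) * (g x - g y))
    (hfh : ∀ x y, 0 ≤ (f x - f y) * (h x - h y))
    (A : Set X) (hA : MeasurableSet A) :
    (sugeno01 μ f A) ^ 2 * sugeno01 μ g A * sugeno01 μ h A ≤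
      (sugeno01 μ (fun x => f x ^ p * g x ^ p) A) ^ (1/p) *
      (sugeno01 μ (fun x => f x ^ q * h x ^ q) A) ^ (1/q) :=
  carlson_xu_ouyang_general μ hμY hμmono p q hp hq f g h hf hg hh hfY hgY hhY hfg hfh A hA
end

section
/- Let F be a σ-algebra of Borel subsets of [0,∞), μ : F → [0,1] a monotone measure, A ∈ F, and f : [0,∞) → [0,∞] a nondecreasing measurable function. Then ((N)∫_A f dμ)² · μ(A) · ((N)∫_A x dμ) ≤ ((N)∫_A f² dμ)^{1/2} · ((N)∫_A x² f(x)² dμ)^{1/2}, where (N)∫_A x dμ and (N)∫_A x² f(x)² dμ denote the Shilkret integrals of the identity function x ↦ x and of x ↦ x² f(x)², respectively. -/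
open scoped ENNReal NNReal

/-- The Shilkret integral of `f` on `A` with respect to the monotone set
function `μ`: `(N)∫_A f dμ = sup_{α ∈ [0,∞]} (α · μ(A ∩ {f ≥ α}))`. -/
noncomputable def shilkret {X : Type*} (μ : Set X → ℝ≥0∞) (f : X → ℝ≥0∞)
    (A : Set X) : ℝ≥0∞ :=
  ⨆ α : ℝ≥0∞, α * μ (A ∩ {x | α ≤ f x})

private lemma le_rpow_half {a b : ℝ≥0∞} (h : a * a ≤ b) : a ≤ b ^ ((1:ℝ)/2) := by
  have h2 : a ^ (2:ℝ) ≤ b := by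
    rw [show (2:ℝ) = ((2:ℕ):ℝ) by norm_num, ENNReal.rpow_natCast, pow_two]
    exact h
  calc a = (a ^ (2:ℝ)) ^ ((1:ℝ)/2) := by
        rw [← ENNReal.rpow_mul]; norm_num
    _ ≤ b ^ ((1:ℝ)/2) := ENNReal.rpow_le_rpow h2 (by norm_num)

/-- Carlson type inequality for the Shilkret integral of a nondecreasing
function `f` on `[0,∞)`:
`((N)∫_A f dμ)² · μ(A) · ((N)∫_A x dμ) ≤
((N)∫_A f² dμ)^{1/2} ((N)∫_A x²f(x)² dμ)^{1/2}`. -/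
theorem carlson_shilkret
    -- μ : F → [0,1] is a monotone measure on the Borel subsets of [0,∞)
    (μ : Set ℝ≥0 → ℝ≥0∞)
    (hμY : ∀ A : Set ℝ≥0, MeasurableSet A → μ A ≤ 1)
    (hμ0 : μ ∅ = 0) (hμX : 0 < μ Set.univ)
    (hμmono : ∀ A B : Set ℝ≥0, MeasurableSet A → MeasurableSet B → A ⊆ B → μ A ≤ μ B)
    (A : Set ℝ≥0) (hA : MeasurableSet A)
    -- f : [0,∞) → [0,∞] nondecreasing and measurable
    (f : ℝ≥0 → ℝ≥0∞) (hf : Measurable f) (hmono : Monotone f) :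
    (shilkret μ f A) ^ 2 * μ A * shilkret μ (fun x => (x : ℝ≥0∞)) A ≤
      (shilkret μ (fun x => f x ^ 2) A) ^ ((1:ℝ)/2) *
      (shilkret μ (fun x => (x : ℝ≥0∞) ^ 2 * f x ^ 2) A) ^ ((1:ℝ)/2) := by
  -- measurability of the level sets
  have hU : ∀ α : ℝ≥0∞, MeasurableSet {x : ℝ≥0 | α ≤ f x} := fun α =>
    hf measurableSet_Ici
  have hV : ∀ β : ℝ≥0∞, MeasurableSet {x : ℝ≥0 | β ≤ (x : ℝ≥0∞)} := fun β =>
    (measurable_coe_nnreal_ennreal) measurableSet_Ici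
  have hsq : Measurable fun x : ℝ≥0 => f x ^ 2 := hf.pow_const 2
  have hxf : Measurable fun x : ℝ≥0 => (x : ℝ≥0∞) ^ 2 * f x ^ 2 :=
    (measurable_coe_nnreal_ennreal.pow_const 2).mul hsq
  set P := shilkret μ (fun x => f x ^ 2) A with hP
  set Q := shilkret μ (fun x => (x : ℝ≥0∞) ^ 2 * f x ^ 2) A with hQ
  -- S ≤ P^(1/2)
  have hS : shilkret μ f A ≤ P ^ ((1:ℝ)/2) := by
    refine iSup_le fun α => le_rpow_half ?_
    have hμα : μ (A ∩ {x | α ≤ f x}) ≤ 1 := hμY _ (hA.inter (hU α))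
    calc (α * μ (A ∩ {x | α ≤ f x})) * (α * μ (A ∩ {x | α ≤ f x}))
        = (α * α) * (μ (A ∩ {x | α ≤ f x}) * μ (A ∩ {x | α ≤ f x})) := by ring
      _ ≤ (α * α) * (1 * μ (A ∩ {x | α ≤ f x})) :=
          mul_le_mul_right (mul_le_mul_left hμα _) _
      _ = (α ^ 2) * μ (A ∩ {x | α ≤ f x}) := by ring
      _ ≤ (α ^ 2) * μ (A ∩ {x | α ^ 2 ≤ f x ^ 2}) := by
          refine mul_le_mul_right (hμmono _ _ (hA.inter (hU α))
            (hA.inter (hsq measurableSet_Ici)) ?_) _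
          rintro x ⟨hxA, hx⟩
          exact ⟨hxA, show α ^ 2 ≤ f x ^ 2 from pow_le_pow_left' hx 2⟩
      _ ≤ P := le_iSup (fun γ : ℝ≥0∞ => γ * μ (A ∩ {x | γ ≤ f x ^ 2})) (α ^ 2)
  -- S * I ≤ Q^(1/2)
  have hSI : shilkret μ f A * shilkret μ (fun x => (x : ℝ≥0∞)) A ≤ Q ^ ((1:ℝ)/2) := by
    rw [shilkret, shilkret, ENNReal.iSup_mul]
    refine iSup_le fun α => ?_
    rw [ENNReal.mul_iSup]
    refine iSup_le fun β => le_rpow_half ?_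
    set U : Set ℝ≥0 := {x | α ≤ f x} with hUdef
    set V : Set ℝ≥0 := {x | β ≤ (x : ℝ≥0∞)} with hVdef
    have hμα : μ (A ∩ U) ≤ 1 := hμY _ (hA.inter (hU α))
    have hμβ : μ (A ∩ V) ≤ 1 := hμY _ (hA.inter (hV β))
    -- the two upper sets are comparable
    have hcomp : U ⊆ V ∨ V ⊆ U := by
      by_cases h : U ⊆ V
      · exact Or.inl h
      · right
        rw [Set.not_subset] at h
        obtain ⟨u, huU, huV⟩ := h
        intro v hvV
        have h1 : (u : ℝ≥0∞) < β := lt_of_not_ge huV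
        have h2 : β ≤ (v : ℝ≥0∞) := hvV
        have huv : u ≤ v := by exact_mod_cast (h1.le.trans h2)
        exact le_trans huU (hmono huv)
    have hprod : μ (A ∩ U) * μ (A ∩ V) ≤ μ (A ∩ (U ∩ V)) := by
      rcases hcomp with h | h
      · rw [Set.inter_eq_self_of_subset_left h]
        calc μ (A ∩ U) * μ (A ∩ V) ≤ μ (A ∩ U) * 1 := mul_le_mul_right hμβ _
          _ = μ (A ∩ U) := mul_one _
      · rw [Set.inter_eq_self_of_subset_right h]
        calc μ (A ∩ U) * μ (A ∩ V) ≤ 1 * μ (A ∩ V) := mul_le_mul_left hμα _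
          _ = μ (A ∩ V) := one_mul _
    have hsub : A ∩ (U ∩ V) ⊆ A ∩ {x : ℝ≥0 | α ^ 2 * β ^ 2 ≤ (x : ℝ≥0∞) ^ 2 * f x ^ 2} := by
      rintro x ⟨hxA, hxU, hxV⟩
      refine ⟨hxA, ?_⟩
      have h1 : α ^ 2 ≤ f x ^ 2 := pow_le_pow_left' hxU 2
      have h2 : β ^ 2 ≤ (x : ℝ≥0∞) ^ 2 := pow_le_pow_left' hxV 2
      calc α ^ 2 * β ^ 2 ≤ f x ^ 2 * (x : ℝ≥0∞) ^ 2 := mul_le_mul' h1 h2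
        _ = (x : ℝ≥0∞) ^ 2 * f x ^ 2 := mul_comm _ _
    have hmeas1 : MeasurableSet (A ∩ (U ∩ V)) :=
      hA.inter ((hU α).inter (hV β))
    have hmeas2 : MeasurableSet
        (A ∩ {x : ℝ≥0 | α ^ 2 * β ^ 2 ≤ (x : ℝ≥0∞) ^ 2 * f x ^ 2}) :=
      hA.inter (hxf measurableSet_Ici)
    have hmm : μ (A ∩ U) * μ (A ∩ V) ≤ 1 :=
      le_trans (mul_le_mul' hμα hμβ) (by simp)
    calc (α * μ (A ∩ U) * (β * μ (A ∩ V))) * (α * μ (A ∩ U) * (β * μ (A ∩ V)))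
        = (α ^ 2 * β ^ 2) * ((μ (A ∩ U) * μ (A ∩ V)) * (μ (A ∩ U) * μ (A ∩ V))) := by
          ring
      _ ≤ (α ^ 2 * β ^ 2) * (1 * (μ (A ∩ U) * μ (A ∩ V))) :=
          mul_le_mul_right (mul_le_mul_left hmm _) _
      _ = (α ^ 2 * β ^ 2) * (μ (A ∩ U) * μ (A ∩ V)) := by rw [one_mul]
      _ ≤ (α ^ 2 * β ^ 2) * μ (A ∩ (U ∩ V)) := mul_le_mul_right hprod _
      _ ≤ (α ^ 2 * β ^ 2) *
            μ (A ∩ {x : ℝ≥0 | α ^ 2 * β ^ 2 ≤ (x : ℝ≥0∞) ^ 2 * f x ^ 2}) :=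
          mul_le_mul_right (hμmono _ _ hmeas1 hmeas2 hsub) _
      _ ≤ Q := le_iSup
            (fun γ : ℝ≥0∞ => γ * μ (A ∩ {x | γ ≤ (x : ℝ≥0∞) ^ 2 * f x ^ 2}))
            (α ^ 2 * β ^ 2)
  calc (shilkret μ f A) ^ 2 * μ A * shilkret μ (fun x => (x : ℝ≥0∞)) A
      = shilkret μ f A * (shilkret μ f A * shilkret μ (fun x => (x : ℝ≥0∞)) A) * μ A := by
        ring
    _ ≤ P ^ ((1:ℝ)/2) * Q ^ ((1:ℝ)/2) * 1 :=
        mul_le_mul' (mul_le_mul' hS hSI) (hμY A hA)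
    _ = P ^ ((1:ℝ)/2) * Q ^ ((1:ℝ)/2) := mul_one _
end

section
/- For all a, b, c, d ∈ [0,1], max(a + b − 1, 0) · max(c + d − 1, 0) ≥ max(ac + bd − 1, 0). Equivalently, with the Łukasiewicz t-norm ∘_L defined by a ∘_L b = max(a + b − 1, 0), one has (a ∘_L b) · (c ∘_L d) ≥ (ac) ∘_L (bd). -/
/-- The Łukasiewicz t-norm on `[0,1]`: `a ∘_L b = max(a + b − 1, 0)`. -/
noncomputable def lukasiewicz (a b : ℝ) : ℝ := max (a + b - 1) 0

/-- For all `a, b, c, d ∈ [0,1]`,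
`(a ∘_L b) · (c ∘_L d) ≥ (ac) ∘_L (bd)`, i.e.
`max(a + b − 1, 0) · max(c + d − 1, 0) ≥ max(ac + bd − 1, 0)`. -/
theorem lukasiewicz_mul_ineq (a b c d : ℝ)
    (ha : a ∈ Set.Icc (0:ℝ) 1) (hb : b ∈ Set.Icc (0:ℝ) 1)
    (hc : c ∈ Set.Icc (0:ℝ) 1) (hd : d ∈ Set.Icc (0:ℝ) 1) :
    lukasiewicz (a * c) (b * d) ≤ lukasiewicz a b * lukasiewicz c d := by
  obtain ⟨ha0, ha1⟩ := ha
  obtain ⟨hb0, hb1⟩ := hb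
  obtain ⟨hc0, hc1⟩ := hc
  obtain ⟨hd0, hd1⟩ := hd
  unfold lukasiewicz
  rcases le_or_gt (a + b) 1 with h1 | h1
  · have : a * c + b * d - 1 ≤ 0 := by nlinarith
    rw [max_eq_right this]
    positivity
  · rcases le_or_gt (c + d) 1 with h2 | h2
    · have : a * c + b * d - 1 ≤ 0 := by nlinarith
      rw [max_eq_right this]
      positivity
    · have e1 : max (a + b - 1) 0 = a + b - 1 := max_eq_left (by linarith)
      have e2 : max (c + d - 1) 0 = c + d - 1 := max_eq_left (by linarith)
      rw [e1, e2]
      have key : a * c + b * d - 1 ≤ (a + b - 1) * (c + d - 1) := by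
        nlinarith [mul_nonneg (sub_nonneg.2 ha1) (sub_nonneg.2 hd1), mul_nonneg (sub_nonneg.2 hb1) (sub_nonneg.2 hc1)]
      exact max_le key (by nlinarith)
end

section
/- Let ∘ be the Dombi t-norm on [0,1], defined by a ∘ b = ab/(a + b − ab) for (a, b) ≠ (0, 0) and 0 ∘ 0 = 0. Then for every s ≥ 1 and all a, b ∈ [0,1], a^s ∘ b ≥ (a ∘ b)^s. -/
/-- The Dombi t-norm on `[0,1]`: `a ∘ b = ab/(a + b − ab)` for `(a,b) ≠ (0,0)`
and `0 ∘ 0 = 0`. -/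
noncomputable def dombi (a b : ℝ) : ℝ :=
  if a = 0 ∧ b = 0 then 0 else a * b / (a + b - a * b)

lemma dombi_key (s x t : ℝ) (hs : 1 ≤ s) (hx : 1 ≤ x) (ht : 0 ≤ t) :
    x ^ s + t ≤ (x + t) ^ s := by
  have hx0 : (0:ℝ) < x := by linarith
  have h1 : (x + t) ^ s = x ^ s * (1 + t / x) ^ s := by
    rw [← Real.mul_rpow hx0.le (by positivity)]
    congr 1
    field_simp
  have bern : 1 + s * (t / x) ≤ (1 + t / x) ^ s :=
    one_add_mul_self_le_rpow_one_add (by have := div_nonneg ht hx0.le; linarith) hs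
  have hxs : x ≤ x ^ s := by
    nth_rewrite 1 [← Real.rpow_one x]
    exact Real.rpow_le_rpow_of_exponent_le hx hs
  have hxpos : 0 < x ^ s := Real.rpow_pos_of_pos hx0 s
  have h2 : x ^ s * (1 + s * (t / x)) ≤ (x + t) ^ s := by
    rw [h1]
    exact mul_le_mul_of_nonneg_left bern hxpos.le
  have h3 : x ^ s + t ≤ x ^ s * (1 + s * (t / x)) := by
    have : x ^ s * (1 + s * (t / x)) = x ^ s + s * t * (x ^ s / x) := by
      field_simp
    rw [this]
    have h4 : (1:ℝ) ≤ x ^ s / x := (one_le_div hx0).2 hxs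
    have h5 : t ≤ t * (x ^ s / x) := le_mul_of_one_le_right ht h4
    have h6 : t * (x ^ s / x) ≤ s * (t * (x ^ s / x)) :=
      le_mul_of_one_le_left (by positivity) hs
    nlinarith [h5, h6]
  linarith

/-- For every `s ≥ 1` and all `a, b ∈ [0,1]`, `a^s ∘ b ≥ (a ∘ b)^s` where `∘`
is the Dombi t-norm. -/
theorem dombi_rpow_ineq (s : ℝ) (hs : 1 ≤ s) (a b : ℝ)
    (ha : a ∈ Set.Icc (0:ℝ) 1) (hb : b ∈ Set.Icc (0:ℝ) 1) :
    (dombi a b) ^ s ≤ dombi (a ^ s) b := by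
  obtain ⟨ha0, ha1⟩ := ha
  obtain ⟨hb0, hb1⟩ := hb
  have hs0 : s ≠ 0 := by linarith
  rcases eq_or_lt_of_le ha0 with rfl | hapos
  · rw [Real.zero_rpow hs0]
    rcases eq_or_ne b 0 with rfl | hbne
    · simp [dombi, Real.zero_rpow hs0]
    · simp [dombi, hbne, Real.zero_rpow hs0]
  rcases eq_or_lt_of_le hb0 with rfl | hbpos
  · have hane : a ≠ 0 := ne_of_gt hapos
    have hasne : a ^ s ≠ 0 := ne_of_gt (Real.rpow_pos_of_pos hapos s)
    simp [dombi, hane, hasne, Real.zero_rpow hs0]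
  -- main case : 0 < a, 0 < b
  have hane : a ≠ 0 := ne_of_gt hapos
  have haspos : 0 < a ^ s := Real.rpow_pos_of_pos hapos s
  have has1 : a ^ s ≤ 1 := Real.rpow_le_one ha0 ha1 (by linarith)
  have hbspos : 0 < b ^ s := Real.rpow_pos_of_pos hbpos s
  have hD : 0 < a + b - a * b := by nlinarith
  have hD' : 0 < a ^ s + b - a ^ s * b := by nlinarith
  rw [dombi, dombi, if_neg (by simp [hane]), if_neg (by simp [ne_of_gt haspos])]
  have key := dombi_key s (1 / a) (1 / b - 1) hs (by rw [le_div_iff₀ hapos]; linarith)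
    (by rw [le_sub_iff_add_le, zero_add, le_div_iff₀ hbpos]; linarith)
  have e1 : 1 / a + (1 / b - 1) = (a + b - a * b) / (a * b) := by field_simp; ring
  have e2 : (1 / a) ^ s = 1 / a ^ s := by
    rw [Real.div_rpow (by norm_num) hapos.le, Real.one_rpow]
  have e3 : ((a + b - a * b) / (a * b)) ^ s = (a + b - a * b) ^ s / (a ^ s * b ^ s) := by
    rw [Real.div_rpow hD.le (by positivity), Real.mul_rpow hapos.le hbpos.le]
  rw [e1, e2, e3] at key
  -- key : 1 / a ^ s + (1 / b - 1) ≤ (a+b-a*b)^s / (a^s * b^s)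
  have key2 : (a ^ s + b - a ^ s * b) / (a ^ s * b) ≤ (a + b - a * b) ^ s / (a ^ s * b ^ s) := by
    have : (a ^ s + b - a ^ s * b) / (a ^ s * b) = 1 / a ^ s + (1 / b - 1) := by
      field_simp; ring
    rw [this]; exact key
  rw [div_le_div_iff₀ (by positivity) (by positivity)] at key2
  have goal_eq : (a * b / (a + b - a * b)) ^ s = a ^ s * b ^ s / (a + b - a * b) ^ s := by
    rw [Real.div_rpow (by positivity) hD.le, Real.mul_rpow hapos.le hbpos.le]
  rw [goal_eq, div_le_div_iff₀ (by positivity) hD']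
  nlinarith [key2]
end

section
/- Let X be a nonempty set and let g, h : X → [0,∞) satisfy inf_{x ∈ X} g(x)h(x) = 0. Define the monotone measure μ on all subsets of X by μ(∅) = 0 and μ(B) = 1 for every nonempty B ⊆ X. Then there is no constant c ∈ [0,∞) such that (C)∫_X f dμ ≤ c · ((C)∫_X g f² dμ)^{1/4} · ((C)∫_X h f² dμ)^{1/4} holds for every function f : X → [0,∞) with (C)∫_X f dμ < ∞. -/
/-! For this `μ` the Choquet integral of a function attaining its maximum is that maximum, so
testing the inequality on the indicator of a point `x` gives `1 ≤ c (g x h x)^{1/4}`, i.e.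
`g x h x ≥ c⁻⁴` for every `x`, which contradicts `inf g h = 0`. -/

open scoped ENNReal NNReal

/-- The Choquet integral of `f` on `A` with respect to the monotone set
function `μ`: `(C)∫_A f dμ = ∫_0^∞ μ(A ∩ {f ≥ t}) dt`
(the Lebesgue integral of the nonincreasing function `t ↦ μ(A ∩ {f ≥ t})`). -/
noncomputable def choquet {X : Type*} (μ : Set X → ℝ≥0∞) (f : X → ℝ≥0∞)
    (A : Set X) : ℝ≥0∞ :=
  ∫⁻ t in Set.Ioi (0:ℝ), μ (A ∩ {x | ENNReal.ofReal t ≤ f x})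

open MeasureTheory Set

lemma volume_Ioi_inter_ofReal_le (a : ℝ≥0∞) :
    volume (Ioi (0:ℝ) ∩ {t | ENNReal.ofReal t ≤ a}) = a := by
  rcases eq_or_ne a ∞ with rfl | ha
  · simp
  · have : Ioi (0:ℝ) ∩ {t | ENNReal.ofReal t ≤ a} = Ioc 0 a.toReal := by
      ext t; simp [ENNReal.ofReal_le_iff_le_toReal ha]
    simp [this, ha]

lemma ENNReal.rpow_one_div_four_pow_four (a : ℝ≥0∞) : (a ^ ((1:ℝ) / 4)) ^ 4 = a := by
  rw [one_div, show (4:ℝ) = (4:ℕ) by norm_num]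
  exact ENNReal.rpow_inv_natCast_pow (by norm_num) a

lemma ENNReal.one_le_pow_four_mul_of_one_le_mul_rpow {c a b : ℝ≥0∞}
    (h : 1 ≤ c * a ^ ((1:ℝ) / 4) * b ^ ((1:ℝ) / 4)) : 1 ≤ c ^ 4 * (a * b) :=
  calc 1 = (1:ℝ≥0∞) ^ 4 := (one_pow 4).symm
    _ ≤ (c * a ^ ((1:ℝ) / 4) * b ^ ((1:ℝ) / 4)) ^ 4 := pow_le_pow_left₀ zero_le_one h 4
    _ = c ^ 4 * (a * b) := by
      rw [mul_pow, mul_pow, ENNReal.rpow_one_div_four_pow_four,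
        ENNReal.rpow_one_div_four_pow_four, mul_assoc]

section SupCapacity

variable {X : Type*} {μ : Set X → ℝ≥0∞}

lemma choquet_univ_of_forall_le (hμ0 : μ ∅ = 0) (hμ1 : ∀ B : Set X, B.Nonempty → μ B = 1)
    {f : X → ℝ≥0∞} {x₀ : X} (hmax : ∀ y, f y ≤ f x₀) :
    choquet μ f univ = f x₀ := by
  have hlevel : ∀ t, μ (univ ∩ {x | ENNReal.ofReal t ≤ f x}) =
      {t : ℝ | ENNReal.ofReal t ≤ f x₀}.indicator 1 t := by
    intro t
    by_cases ht : ENNReal.ofReal t ≤ f x₀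
    · simp [ht, hμ1 {x | ENNReal.ofReal t ≤ f x} ⟨x₀, ht⟩]
    · have : {x | ENNReal.ofReal t ≤ f x} = ∅ :=
        eq_empty_of_forall_notMem fun x hx => ht (le_trans hx (hmax x))
      simp [ht, this, hμ0]
  simp_rw [choquet, hlevel]
  rw [lintegral_indicator_one₀ ?_, Measure.restrict_apply' measurableSet_Ioi, inter_comm,
    volume_Ioi_inter_ofReal_le]
  exact (measurableSet_le ENNReal.measurable_ofReal measurable_const).nullMeasurableSet

lemma choquet_univ_of_eq_zero_of_ne (hμ0 : μ ∅ = 0) (hμ1 : ∀ B : Set X, B.Nonempty → μ B = 1)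
    {f : X → ℝ≥0∞} {x₀ : X} (hf : ∀ y, y ≠ x₀ → f y = 0) :
    choquet μ f univ = f x₀ :=
  choquet_univ_of_forall_le hμ0 hμ1 fun y => by
    by_cases hy : y = x₀
    · rw [hy]
    · simp [hf y hy]

end SupCapacity

theorem no_carlson_constant_choquet_general {X : Type*}
    -- g, h : X → [0,∞) with inf g·h = 0
    (g h : X → ℝ≥0∞)
    (hinf : ⨅ x, g x * h x = 0)
    -- μ(∅) = 0 and μ(B) = 1 for every nonempty B
    (μ : Set X → ℝ≥0∞)
    (hμ0 : μ ∅ = 0) (hμ1 : ∀ B : Set X, B.Nonempty → μ B = 1) :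
    ¬ ∃ c : ℝ≥0,
      ∀ f : X → ℝ≥0∞, (∀ x, f x ≠ ∞) → choquet μ f Set.univ < ∞ →
        choquet μ f Set.univ ≤ (c : ℝ≥0∞) *
          (choquet μ (fun x => g x * f x ^ 2) Set.univ) ^ ((1:ℝ)/4) *
          (choquet μ (fun x => h x * f x ^ 2) Set.univ) ^ ((1:ℝ)/4) := by
  rintro ⟨c, hc⟩
  have hbound : ∀ x₀, 1 ≤ g x₀ * h x₀ * (c : ℝ≥0∞) ^ 4 := by
    intro x₀
    set f : X → ℝ≥0∞ := ({x₀} : Set X).indicator 1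
    have hf : ∀ y, y ≠ x₀ → f y = 0 := fun y hy => by simp [f, hy]
    have hfx₀ : f x₀ = 1 := by simp [f]
    have hchoquet (φ : X → ℝ≥0∞) : choquet μ (fun x => φ x * f x ^ 2) univ = φ x₀ := by
      rw [choquet_univ_of_eq_zero_of_ne hμ0 hμ1 fun y hy => by simp [hf y hy], hfx₀,
        one_pow, mul_one]
    have hcarlson := hc f (fun y => by by_cases hy : y = x₀ <;> simp [f, hy])
      (by simp [choquet_univ_of_eq_zero_of_ne hμ0 hμ1 hf, hfx₀])
    rw [choquet_univ_of_eq_zero_of_ne hμ0 hμ1 hf, hfx₀, hchoquet, hchoquet] at hcarlson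
    rw [mul_comm]
    exact ENNReal.one_le_pow_four_mul_of_one_le_mul_rpow hcarlson
  have hzero : 1 / (c : ℝ≥0∞) ^ 4 = 0 :=
    le_antisymm (hinf ▸ le_iInf fun x => ENNReal.div_le_of_le_mul (hbound x)) bot_le
  simp at hzero

/-- There is no finite constant `c` such that the Carlson type inequality
`(C)∫_X f dμ ≤ c ((C)∫_X g f² dμ)^{1/4} ((C)∫_X h f² dμ)^{1/4}` holds for
every integrable `f`, when `μ(B) = 1` for all nonempty `B`, `μ(∅) = 0` and
`inf_{x ∈ X} g(x)h(x) = 0`. -/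
theorem no_carlson_constant_choquet {X : Type*} [Nonempty X]
    -- g, h : X → [0,∞) with inf g·h = 0
    (g h : X → ℝ≥0∞) (hg : ∀ x, g x ≠ ∞) (hh : ∀ x, h x ≠ ∞)
    (hinf : ⨅ x, g x * h x = 0)
    -- μ(∅) = 0 and μ(B) = 1 for every nonempty B
    (μ : Set X → ℝ≥0∞)
    (hμ0 : μ ∅ = 0) (hμ1 : ∀ B : Set X, B.Nonempty → μ B = 1) :
    ¬ ∃ c : ℝ≥0,
      ∀ f : X → ℝ≥0∞, (∀ x, f x ≠ ∞) → choquet μ f Set.univ < ∞ →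
        choquet μ f Set.univ ≤ (c : ℝ≥0∞) *
          (choquet μ (fun x => g x * f x ^ 2) Set.univ) ^ ((1:ℝ)/4) *
          (choquet μ (fun x => h x * f x ^ 2) Set.univ) ^ ((1:ℝ)/4) :=
  no_carlson_constant_choquet_general g h hinf μ hμ0 hμ1
end

section
/- Let (X, F) be a measurable space, μ : F → [0,∞] a monotone measure, p, q ≥ 1 and r, s > 0. Let f, g, h : X → [0,∞) be measurable functions such that f, g are comonotone and f, h are comonotone. Let A ∈ F with 0 < μ(A) < ∞ and suppose f is integrable on A, i.e. (C)∫_A f dμ < ∞. Then ((C)∫_A f dμ) · ((C)∫_A g dμ)^{r/(r+s)} · ((C)∫_A h dμ)^{s/(r+s)} ≤ μ(A)^d · ((C)∫_A f^p g^p dμ)^{r/(p(r+s))} · ((C)∫_A f^q h^q dμ)^{s/(q(r+s))}, where d = 2 − (1/(r+s))·(r/p + s/q). -/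
/-!
For a monotone set function, `t ↦ μ (A ∩ {φ ≥ t})` is antitone with values in `[0, μ A]`, and by
Fubini its integral over `(0, ∞)` equals that of `α_φ l := |{t > 0 | μ (A ∩ {φ ≥ t}) > l}|`, an
antitone function supported in `(0, μ A)`. Comonotone functions have nested level sets, which gives
`α_φ · α_ψ ≤ α_{φψ}`; similarly `α_φ ^ p ≤ α_{φ ^ p}`. Chebyshev's inequality for the antitone
`α_φ, α_ψ` on `(0, μ A)` and Hölder's inequality then give
`(C)∫ f · (C)∫ g ≤ μ(A)^(2 - 1/p) ((C)∫ f^p g^p)^(1/p)`, the same with `h, q`, and the theorem is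
the geometric mean of these two inequalities with weights `r/(r+s)` and `s/(r+s)`.
-/
open scoped ENNReal NNReal

/-- `f, g : X → [0,∞)` are comonotone: `(f(x) − f(y))(g(x) − g(y)) ≥ 0`. -/
def Comonotone {X : Type*} (f g : X → ℝ≥0) : Prop :=
  ∀ x y, 0 ≤ ((f x : ℝ) - (f y : ℝ)) * ((g x : ℝ) - (g y : ℝ))

open MeasureTheory Set

lemma volume_Ioo_zero_toReal {c : ℝ≥0∞} (hc : c ≠ ∞) : volume (Ioo 0 c.toReal) = c := by
  rw [Real.volume_Ioo, sub_zero, ENNReal.ofReal_toReal hc]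

/-- For antitone `w` the superlevel set is an interval `(0, τ)` or `(0, τ]`, so this is the
generalized inverse of `w`. -/
noncomputable def superlevelLength (w : ℝ → ℝ≥0∞) (l : ℝ) : ℝ≥0∞ :=
  volume ({t | ENNReal.ofReal l < w t} ∩ Ioi 0)

lemma volume_setOf_ofReal_lt_inter_Ioi (c : ℝ≥0∞) :
    volume ({l : ℝ | ENNReal.ofReal l < c} ∩ Ioi 0) = c := by
  rcases eq_or_ne c ⊤ with rfl | hc
  · simp
  · have : {l : ℝ | ENNReal.ofReal l < c} ∩ Ioi 0 = Ioo 0 c.toReal := by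
      ext l
      simp only [mem_inter_iff, mem_ofPred_eq, mem_Ioi, mem_Ioo]
      constructor
      · rintro ⟨hlc, hl⟩; exact ⟨hl, (ENNReal.ofReal_lt_iff_lt_toReal hl.le hc).mp hlc⟩
      · rintro ⟨hl, hlc⟩; exact ⟨(ENNReal.ofReal_lt_iff_lt_toReal hl.le hc).mpr hlc, hl⟩
    rw [this, Real.volume_Ioo, sub_zero, ENNReal.ofReal_toReal hc]

theorem setLIntegral_Ioi_eq_setLIntegral_superlevelLength {w : ℝ → ℝ≥0∞} (hw : Measurable w) :
    ∫⁻ t in Ioi 0, w t = ∫⁻ l in Ioi 0, superlevelLength w l := by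
  set ν := volume.restrict (Ioi (0:ℝ))
  have hs : MeasurableSet {z : ℝ × ℝ | ENNReal.ofReal z.2 < w z.1} :=
    measurableSet_lt (by fun_prop) (hw.comp measurable_fst)
  calc ∫⁻ t, w t ∂ν = ∫⁻ t, ν (Prod.mk t ⁻¹' {z : ℝ × ℝ | ENNReal.ofReal z.2 < w z.1}) ∂ν := by
        refine lintegral_congr fun t => ?_
        rw [Measure.restrict_apply' measurableSet_Ioi]
        exact (volume_setOf_ofReal_lt_inter_Ioi (w t)).symm
    _ = ν.prod ν {z : ℝ × ℝ | ENNReal.ofReal z.2 < w z.1} := (Measure.prod_apply hs).symm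
    _ = ∫⁻ l, ν ((·, l) ⁻¹' {z : ℝ × ℝ | ENNReal.ofReal z.2 < w z.1}) ∂ν :=
        Measure.prod_apply_symm hs
    _ = ∫⁻ l, superlevelLength w l ∂ν := by
        refine lintegral_congr fun l => ?_
        rw [Measure.restrict_apply' measurableSet_Ioi]
        rfl

lemma superlevelLength_antitone (w : ℝ → ℝ≥0∞) : Antitone (superlevelLength w) :=
  fun _ _ hl => measure_mono <| inter_subset_inter_left _ fun _ ht =>
    (ENNReal.ofReal_le_ofReal hl).trans_lt ht

lemma setLIntegral_Ioi_superlevelLength_eq_Ioo {w : ℝ → ℝ≥0∞} {m : ℝ}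
    (hw : ∀ t, w t ≤ ENNReal.ofReal m) :
    ∫⁻ l in Ioi 0, superlevelLength w l = ∫⁻ l in Ioo 0 m, superlevelLength w l := by
  have hsupp : ∀ l, m ≤ l → superlevelLength w l = 0 := fun l hl =>
    measure_mono_null (fun t ht => ((hw t).trans (ENNReal.ofReal_le_ofReal hl)).not_gt ht.1)
      measure_empty
  rw [← Iio_inter_Ioi, ← Measure.restrict_restrict measurableSet_Iio,
    ← lintegral_indicator measurableSet_Iio]
  refine lintegral_congr fun l => ?_
  by_cases hl : l < m
  · rw [indicator_of_mem (show l ∈ Iio m from hl)]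
  · rw [indicator_of_notMem (show l ∉ Iio m from hl), hsupp l (not_lt.mp hl)]

lemma ofReal_le_superlevelLength {w : ℝ → ℝ≥0∞} (hw : Antitone w) {l t : ℝ}
    (ht : ENNReal.ofReal l < w t) : ENNReal.ofReal t ≤ superlevelLength w l := by
  rw [← sub_zero t, ← Real.volume_Ioo]
  exact measure_mono fun u hu => ⟨ht.trans_le (hw hu.2.le), hu.1⟩

lemma exists_lt_ofReal_of_lt_superlevelLength {w : ℝ → ℝ≥0∞} {l : ℝ} {a : ℝ≥0∞}
    (ha : a < superlevelLength w l) :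
    ∃ t, 0 < t ∧ ENNReal.ofReal l < w t ∧ a < ENNReal.ofReal t := by
  by_contra! h
  have hsub : {t | ENNReal.ofReal l < w t} ∩ Ioi 0 ⊆ Ioc 0 a.toReal := fun t ht =>
    ⟨ht.2, (ENNReal.ofReal_le_iff_le_toReal ha.ne_top).mp (h t ht.2 ht.1)⟩
  have := ha.trans_le (measure_mono hsub)
  rw [Real.volume_Ioc, sub_zero, ENNReal.ofReal_toReal ha.ne_top] at this
  exact this.false

lemma superlevelLength_mul_le {w₁ w₂ w₃ : ℝ → ℝ≥0∞} (hw₃ : Antitone w₃) {l : ℝ}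
    (h : ∀ t u, 0 < t → 0 < u → ENNReal.ofReal l < w₁ t → ENNReal.ofReal l < w₂ u →
      ENNReal.ofReal l < w₃ (t * u)) :
    superlevelLength w₁ l * superlevelLength w₂ l ≤ superlevelLength w₃ l := by
  refine ENNReal.mul_le_of_forall_lt fun a ha b hb => ?_
  obtain ⟨t, ht0, ht, hat⟩ := exists_lt_ofReal_of_lt_superlevelLength ha
  obtain ⟨u, hu0, hu, hbu⟩ := exists_lt_ofReal_of_lt_superlevelLength hb
  calc a * b ≤ ENNReal.ofReal t * ENNReal.ofReal u := mul_le_mul' hat.le hbu.le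
    _ = ENNReal.ofReal (t * u) := (ENNReal.ofReal_mul ht0.le).symm
    _ ≤ superlevelLength w₃ l :=
        ofReal_le_superlevelLength hw₃ (h t u ht0 hu0 ht hu)

lemma superlevelLength_rpow_le {w₁ w₂ : ℝ → ℝ≥0∞} (hw₂ : Antitone w₂) {l p : ℝ} (hp : 0 < p)
    (h : ∀ t, 0 < t → ENNReal.ofReal l < w₁ t → ENNReal.ofReal l < w₂ (t ^ p)) :
    superlevelLength w₁ l ^ p ≤ superlevelLength w₂ l := by
  rw [← ENNReal.le_rpow_inv_iff hp]
  refine le_of_forall_lt_imp_le_of_dense fun a ha => ?_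
  obtain ⟨t, ht0, ht, hat⟩ := exists_lt_ofReal_of_lt_superlevelLength ha
  rw [ENNReal.le_rpow_inv_iff hp]
  calc a ^ p ≤ ENNReal.ofReal t ^ p := ENNReal.rpow_le_rpow hat.le hp.le
    _ = ENNReal.ofReal (t ^ p) := ENNReal.ofReal_rpow_of_nonneg ht0.le hp.le
    _ ≤ superlevelLength w₂ l :=
        ofReal_le_superlevelLength hw₂ (h t ht0 ht)

lemma ENNReal.mul_add_mul_le_mul_add_mul {a b c d : ℝ≥0∞} (hab : a ≤ b) (hcd : c ≤ d) :
    a * d + b * c ≤ a * c + b * d := by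
  obtain ⟨b, rfl⟩ := exists_add_of_le hab
  obtain ⟨d, rfl⟩ := exists_add_of_le hcd
  calc a * (c + d) + (a + b) * c ≤ a * (c + d) + (a + b) * c + b * d := le_self_add
    _ = a * c + (a + b) * (c + d) := by ring

lemma Monovary.ennreal_mul_add_mul_le {ι : Type*} {f g : ι → ℝ≥0∞} (hfg : Monovary f g)
    (i j : ι) : f i * g j + f j * g i ≤ f i * g i + f j * g j := by
  rcases lt_trichotomy (g i) (g j) with h | h | h
  · exact ENNReal.mul_add_mul_le_mul_add_mul (hfg h) h.le
  · rw [h]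
  · rw [add_comm, add_comm (f i * g i)]
    exact ENNReal.mul_add_mul_le_mul_add_mul (hfg h) h.le

theorem Monovary.lintegral_mul_lintegral_le {ι : Type*} [MeasurableSpace ι] (ν : Measure ι)
    {f g : ι → ℝ≥0∞} (hf : Measurable f) (hg : Measurable g) (hfg : Monovary f g) :
    (∫⁻ i, f i ∂ν) * ∫⁻ i, g i ∂ν ≤ ν univ * ∫⁻ i, f i * g i ∂ν := by
  have hcross : ∫⁻ i, ∫⁻ j, (f i * g j + f j * g i) ∂ν ∂ν
      = 2 * ((∫⁻ i, f i ∂ν) * ∫⁻ i, g i ∂ν) := by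
    simp_rw [lintegral_add_left (hg.const_mul _), lintegral_const_mul _ hg,
      lintegral_mul_const _ hf]
    rw [lintegral_add_left (hf.mul_const _), lintegral_mul_const _ hf, lintegral_const_mul _ hg]
    ring
  have hdiag : ∫⁻ i, ∫⁻ j, (f i * g i + f j * g j) ∂ν ∂ν
      = 2 * (ν univ * ∫⁻ i, f i * g i ∂ν) := by
    simp_rw [lintegral_add_left measurable_const, lintegral_const]
    have hfg' : Measurable fun i => f i * g i := hf.mul hg
    rw [lintegral_add_left (hfg'.mul_const _), lintegral_mul_const _ hfg', lintegral_const]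
    ring
  have h2 : 2 * ((∫⁻ i, f i ∂ν) * ∫⁻ i, g i ∂ν) ≤ 2 * (ν univ * ∫⁻ i, f i * g i ∂ν) := by
    rw [← hcross, ← hdiag]
    exact lintegral_mono fun i => lintegral_mono fun j => hfg.ennreal_mul_add_mul_le i j
  exact (ENNReal.mul_le_mul_iff_right two_ne_zero ENNReal.ofNat_ne_top).mp h2

lemma lintegral_le_measure_univ_rpow_mul_lintegral_rpow {ι : Type*} [MeasurableSpace ι]
    (ν : Measure ι) {f : ι → ℝ≥0∞} (hf : AEMeasurable f ν) {p : ℝ} (hp : 1 ≤ p) :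
    ∫⁻ i, f i ∂ν ≤ ν univ ^ (1 - 1 / p) * (∫⁻ i, f i ^ p ∂ν) ^ (1 / p) := by
  have := eLpNorm'_le_eLpNorm'_mul_rpow_measure_univ one_pos hp hf.aestronglyMeasurable
  simpa [eLpNorm', mul_comm] using this

noncomputable def upperLevelMeasure {X : Type*} (μ : Set X → ℝ≥0∞) (φ : X → ℝ≥0∞) (A : Set X)
    (t : ℝ) : ℝ≥0∞ :=
  μ (A ∩ {x | ENNReal.ofReal t ≤ φ x})

section Choquet

variable {X : Type*} [MeasurableSpace X] {μ : Set X → ℝ≥0∞} {A : Set X} {φ ψ : X → ℝ≥0∞}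

lemma upperLevelMeasure_le_upperLevelMeasure
    (hμ : ∀ A B : Set X, MeasurableSet A → MeasurableSet B → A ⊆ B → μ A ≤ μ B)
    (hA : MeasurableSet A) (hφ : Measurable φ) (hψ : Measurable ψ) {t u : ℝ}
    (h : ∀ x ∈ A, ENNReal.ofReal t ≤ φ x → ENNReal.ofReal u ≤ ψ x) :
    upperLevelMeasure μ φ A t ≤ upperLevelMeasure μ ψ A u :=
  hμ _ _ (hA.inter (measurableSet_le measurable_const hφ))
    (hA.inter (measurableSet_le measurable_const hψ)) fun x hx => ⟨hx.1, h x hx.1 hx.2⟩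

lemma upperLevelMeasure_antitone
    (hμ : ∀ A B : Set X, MeasurableSet A → MeasurableSet B → A ⊆ B → μ A ≤ μ B)
    (hA : MeasurableSet A) (hφ : Measurable φ) : Antitone (upperLevelMeasure μ φ A) :=
  fun _ _ htu => upperLevelMeasure_le_upperLevelMeasure hμ hA hφ hφ fun _ _ hx =>
    (ENNReal.ofReal_le_ofReal htu).trans hx

lemma upperLevelMeasure_le_measure
    (hμ : ∀ A B : Set X, MeasurableSet A → MeasurableSet B → A ⊆ B → μ A ≤ μ B)
    (hA : MeasurableSet A) (hφ : Measurable φ) (t : ℝ) : upperLevelMeasure μ φ A t ≤ μ A :=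
  hμ _ _ (hA.inter (measurableSet_le measurable_const hφ)) hA inter_subset_left

lemma min_upperLevelMeasure_le_mul
    (hμ : ∀ A B : Set X, MeasurableSet A → MeasurableSet B → A ⊆ B → μ A ≤ μ B)
    (hA : MeasurableSet A) (hφ : Measurable φ) (hψ : Measurable ψ) (hφψ : MonovaryOn φ ψ A)
    {t : ℝ} (ht : 0 ≤ t) (u : ℝ) :
    min (upperLevelMeasure μ φ A t) (upperLevelMeasure μ ψ A u) ≤
      upperLevelMeasure μ (fun x => φ x * ψ x) A (t * u) := by
  have hchain : (∀ x ∈ A, ENNReal.ofReal t ≤ φ x → ENNReal.ofReal u ≤ ψ x) ∨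
      (∀ x ∈ A, ENNReal.ofReal u ≤ ψ x → ENNReal.ofReal t ≤ φ x) := by
    by_contra! h
    obtain ⟨⟨x, hx, hφx, hψx⟩, ⟨y, hy, hψy, hφy⟩⟩ := h
    exact (hφy.trans_le hφx).not_ge (hφψ hx hy (hψx.trans_le hψy))
  have hmul : ∀ x, ENNReal.ofReal t ≤ φ x → ENNReal.ofReal u ≤ ψ x →
      ENNReal.ofReal (t * u) ≤ φ x * ψ x := fun x h₁ h₂ => by
    rw [ENNReal.ofReal_mul ht]
    exact mul_le_mul' h₁ h₂
  rcases hchain with h | h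
  · exact min_le_left _ _ |>.trans <| upperLevelMeasure_le_upperLevelMeasure hμ hA hφ
      (hφ.mul hψ) fun x hx h₁ => hmul x h₁ (h x hx h₁)
  · exact min_le_right _ _ |>.trans <| upperLevelMeasure_le_upperLevelMeasure hμ hA hψ
      (hφ.mul hψ) fun x hx h₂ => hmul x (h x hx h₂) h₂

lemma upperLevelMeasure_le_rpow
    (hμ : ∀ A B : Set X, MeasurableSet A → MeasurableSet B → A ⊆ B → μ A ≤ μ B)
    (hA : MeasurableSet A) (hφ : Measurable φ) {t p : ℝ} (ht : 0 ≤ t) (hp : 0 ≤ p) :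
    upperLevelMeasure μ φ A t ≤ upperLevelMeasure μ (fun x => φ x ^ p) A (t ^ p) :=
  upperLevelMeasure_le_upperLevelMeasure hμ hA hφ (hφ.pow_const p) fun _ _ hx => by
    rw [← ENNReal.ofReal_rpow_of_nonneg ht hp]
    exact ENNReal.rpow_le_rpow hx hp

lemma choquet_eq_setLIntegral_Ioi_superlevelLength
    (hμ : ∀ A B : Set X, MeasurableSet A → MeasurableSet B → A ⊆ B → μ A ≤ μ B)
    (hA : MeasurableSet A) (hφ : Measurable φ) :
    choquet μ φ A = ∫⁻ l in Ioi 0, superlevelLength (upperLevelMeasure μ φ A) l :=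
  setLIntegral_Ioi_eq_setLIntegral_superlevelLength (upperLevelMeasure_antitone hμ hA hφ).measurable

lemma choquet_eq_setLIntegral_Ioo_superlevelLength
    (hμ : ∀ A B : Set X, MeasurableSet A → MeasurableSet B → A ⊆ B → μ A ≤ μ B)
    (hA : MeasurableSet A) (hAfin : μ A ≠ ∞) (hφ : Measurable φ) :
    choquet μ φ A =
      ∫⁻ l in Ioo 0 (μ A).toReal, superlevelLength (upperLevelMeasure μ φ A) l := by
  rw [choquet_eq_setLIntegral_Ioi_superlevelLength hμ hA hφ]
  refine setLIntegral_Ioi_superlevelLength_eq_Ioo fun t => ?_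
  rw [ENNReal.ofReal_toReal hAfin]
  exact upperLevelMeasure_le_measure hμ hA hφ t

theorem MonovaryOn.choquet_mul_choquet_le
    (hμ : ∀ A B : Set X, MeasurableSet A → MeasurableSet B → A ⊆ B → μ A ≤ μ B)
    (hA : MeasurableSet A) (hAfin : μ A ≠ ∞) (hφ : Measurable φ) (hψ : Measurable ψ)
    (hφψ : MonovaryOn φ ψ A) :
    choquet μ φ A * choquet μ ψ A ≤ μ A * choquet μ (fun x => φ x * ψ x) A := by
  set α := superlevelLength (upperLevelMeasure μ φ A)
  set β := superlevelLength (upperLevelMeasure μ ψ A)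
  have hαβ : ∀ l, α l * β l ≤ superlevelLength (upperLevelMeasure μ (fun x => φ x * ψ x) A) l :=
    fun _ => superlevelLength_mul_le (upperLevelMeasure_antitone hμ hA (hφ.mul hψ))
      fun _ u ht _ h₁ h₂ =>
        (lt_min h₁ h₂).trans_le (min_upperLevelMeasure_le_mul hμ hA hφ hψ hφψ ht.le u)
  have hα := superlevelLength_antitone (upperLevelMeasure μ φ A)
  have hβ := superlevelLength_antitone (upperLevelMeasure μ ψ A)
  calc choquet μ φ A * choquet μ ψ A
      = (∫⁻ l in Ioo 0 (μ A).toReal, α l) * ∫⁻ l in Ioo 0 (μ A).toReal, β l := by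
        rw [choquet_eq_setLIntegral_Ioo_superlevelLength hμ hA hAfin hφ,
          choquet_eq_setLIntegral_Ioo_superlevelLength hμ hA hAfin hψ]
    _ ≤ μ A * ∫⁻ l in Ioo 0 (μ A).toReal, α l * β l := by
        simpa only [Measure.restrict_apply_univ, volume_Ioo_zero_toReal hAfin] using
          (hα.monovary hβ).lintegral_mul_lintegral_le (volume.restrict (Ioo 0 (μ A).toReal))
            hα.measurable hβ.measurable
    _ ≤ μ A * ∫⁻ l in Ioi 0, α l * β l := by
        gcongr
        exact Ioo_subset_Ioi_self
    _ ≤ μ A * choquet μ (fun x => φ x * ψ x) A := by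
        rw [choquet_eq_setLIntegral_Ioi_superlevelLength (φ := fun x => φ x * ψ x) hμ hA
          (hφ.mul hψ)]
        gcongr with l
        exact hαβ l

theorem choquet_le_rpow_mul_choquet_rpow
    (hμ : ∀ A B : Set X, MeasurableSet A → MeasurableSet B → A ⊆ B → μ A ≤ μ B)
    (hA : MeasurableSet A) (hAfin : μ A ≠ ∞) (hφ : Measurable φ) {p : ℝ} (hp : 1 ≤ p) :
    choquet μ φ A ≤ μ A ^ (1 - 1 / p) * choquet μ (fun x => φ x ^ p) A ^ (1 / p) := by
  set α := superlevelLength (upperLevelMeasure μ φ A)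
  have hαp : ∀ l, α l ^ p ≤ superlevelLength (upperLevelMeasure μ (fun x => φ x ^ p) A) l :=
    fun _ => superlevelLength_rpow_le (upperLevelMeasure_antitone hμ hA (hφ.pow_const p))
      (by linarith) fun _ ht h =>
        h.trans_le (upperLevelMeasure_le_rpow hμ hA hφ ht.le (by linarith))
  calc choquet μ φ A = ∫⁻ l in Ioo 0 (μ A).toReal, α l :=
        choquet_eq_setLIntegral_Ioo_superlevelLength hμ hA hAfin hφ
    _ ≤ μ A ^ (1 - 1 / p) * (∫⁻ l in Ioo 0 (μ A).toReal, α l ^ p) ^ (1 / p) := by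
        simpa only [Measure.restrict_apply_univ, volume_Ioo_zero_toReal hAfin] using
          lintegral_le_measure_univ_rpow_mul_lintegral_rpow
            (volume.restrict (Ioo 0 (μ A).toReal))
            (superlevelLength_antitone (upperLevelMeasure μ φ A)).measurable.aemeasurable hp
    _ ≤ μ A ^ (1 - 1 / p) * (∫⁻ l in Ioi 0, α l ^ p) ^ (1 / p) := by
        gcongr
        exact Ioo_subset_Ioi_self
    _ ≤ μ A ^ (1 - 1 / p) * choquet μ (fun x => φ x ^ p) A ^ (1 / p) := by
        rw [choquet_eq_setLIntegral_Ioi_superlevelLength (φ := fun x => φ x ^ p) hμ hA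
          (hφ.pow_const p)]
        gcongr with l
        exact hαp l

theorem MonovaryOn.choquet_mul_choquet_le_rpow
    (hμ : ∀ A B : Set X, MeasurableSet A → MeasurableSet B → A ⊆ B → μ A ≤ μ B)
    (hA : MeasurableSet A) (hAfin : μ A ≠ ∞) (hφ : Measurable φ) (hψ : Measurable ψ)
    (hφψ : MonovaryOn φ ψ A) {p : ℝ} (hp : 1 ≤ p) :
    choquet μ φ A * choquet μ ψ A ≤
      μ A ^ (2 - 1 / p) * choquet μ (fun x => φ x ^ p * ψ x ^ p) A ^ (1 / p) := by
  have hp' : 0 ≤ 1 - 1 / p := sub_nonneg.2 ((div_le_one (by linarith)).2 hp)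
  calc choquet μ φ A * choquet μ ψ A ≤ μ A * choquet μ (fun x => φ x * ψ x) A :=
        hφψ.choquet_mul_choquet_le hμ hA hAfin hφ hψ
    _ ≤ μ A * (μ A ^ (1 - 1 / p) * choquet μ (fun x => (φ x * ψ x) ^ p) A ^ (1 / p)) := by
        gcongr
        exact choquet_le_rpow_mul_choquet_rpow hμ hA hAfin (hφ.mul hψ) hp
    _ = μ A ^ (2 - 1 / p) * choquet μ (fun x => φ x ^ p * ψ x ^ p) A ^ (1 / p) := by
        simp_rw [ENNReal.mul_rpow_of_nonneg _ _ (zero_le_one.trans hp)]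
        rw [← mul_assoc, show 2 - 1 / p = 1 + (1 - 1 / p) by ring,
          ENNReal.rpow_add_of_nonneg _ _ zero_le_one hp', ENNReal.rpow_one]

end Choquet

lemma Comonotone.monovary {X : Type*} {f g : X → ℝ≥0} (h : Comonotone f g) :
    Monovary (fun x => (f x : ℝ≥0∞)) (fun x => (g x : ℝ≥0∞)) := by
  intro x y hxy
  have hg : (g x : ℝ) < g y := NNReal.coe_lt_coe.2 (ENNReal.coe_lt_coe.1 hxy)
  by_contra! hf
  have hf' : (f y : ℝ) < f x := NNReal.coe_lt_coe.2 (ENNReal.coe_lt_coe.1 hf)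
  exact (h x y).not_gt (mul_neg_of_pos_of_neg (sub_pos.2 hf') (sub_neg.2 hg))

lemma ENNReal.mul_rpow_mul_mul_rpow_one_sub (a b c : ℝ≥0∞) {θ : ℝ} (h₀ : 0 ≤ θ) (h₁ : θ ≤ 1) :
    (a * b) ^ θ * (a * c) ^ (1 - θ) = a * b ^ θ * c ^ (1 - θ) := by
  rw [ENNReal.mul_rpow_of_nonneg _ _ h₀, ENNReal.mul_rpow_of_nonneg _ _ (sub_nonneg.2 h₁),
    mul_mul_mul_comm, ← ENNReal.rpow_add_of_nonneg _ _ h₀ (sub_nonneg.2 h₁), add_sub_cancel,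
    ENNReal.rpow_one, mul_assoc]

theorem carlson_choquet_general {X : Type*} [MeasurableSpace X]
    -- μ : F → [0,∞] is a monotone measure
    (μ : Set X → ℝ≥0∞)
    (hμmono : ∀ A B : Set X, MeasurableSet A → MeasurableSet B → A ⊆ B → μ A ≤ μ B)
    -- p, q ≥ 1 and r, s > 0
    (p q r s : ℝ) (hp : 1 ≤ p) (hq : 1 ≤ q) (hr : 0 < r) (hs : 0 < s)
    -- f, g, h : X → [0,∞) measurable, f, g comonotone and f, h comonotone
    (f g h : X → ℝ≥0) (hf : Measurable f) (hg : Measurable g) (hh : Measurable h)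
    (hfg : Comonotone f g) (hfh : Comonotone f h)
    -- A ∈ F with 0 < μ(A) < ∞, and f integrable on A
    (A : Set X) (hA : MeasurableSet A) (hAfin : μ A < ∞) :
    choquet μ (fun x => (f x : ℝ≥0∞)) A *
      (choquet μ (fun x => (g x : ℝ≥0∞)) A) ^ (r/(r+s)) *
      (choquet μ (fun x => (h x : ℝ≥0∞)) A) ^ (s/(r+s)) ≤
    (μ A) ^ (2 - (1/(r+s)) * (r/p + s/q)) *
      (choquet μ (fun x => (f x : ℝ≥0∞) ^ p * (g x : ℝ≥0∞) ^ p) A) ^ (r/(p*(r+s))) *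
      (choquet μ (fun x => (f x : ℝ≥0∞) ^ q * (h x : ℝ≥0∞) ^ q) A) ^ (s/(q*(r+s))) := by
  have hθ₀ : 0 ≤ r / (r + s) := by positivity
  have hsθ : s / (r + s) = 1 - r / (r + s) := by field_simp; ring
  have hθ₁ : 0 ≤ 1 - r / (r + s) := hsθ ▸ by positivity
  have hp' : 0 ≤ 2 - 1 / p := by linarith [(div_le_one (by linarith : (0:ℝ) < p)).2 hp]
  have hq' : 0 ≤ 2 - 1 / q := by linarith [(div_le_one (by linarith : (0:ℝ) < q)).2 hq]
  have hfg' := (hfg.monovary.monovaryOn A).choquet_mul_choquet_le_rpow hμmono hA hAfin.ne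
    hf.coe_nnreal_ennreal hg.coe_nnreal_ennreal hp
  have hfh' := (hfh.monovary.monovaryOn A).choquet_mul_choquet_le_rpow hμmono hA hAfin.ne
    hf.coe_nnreal_ennreal hh.coe_nnreal_ennreal hq
  rw [hsθ, ← ENNReal.mul_rpow_mul_mul_rpow_one_sub _ _ _ hθ₀ (sub_nonneg.1 hθ₁)]
  calc _ ≤ (μ A ^ (2 - 1 / p) * _ ^ (1 / p)) ^ (r / (r + s)) *
        (μ A ^ (2 - 1 / q) * _ ^ (1 / q)) ^ (1 - r / (r + s)) := by gcongr
    _ = _ := by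
        rw [ENNReal.mul_rpow_of_nonneg _ _ hθ₀, ENNReal.mul_rpow_of_nonneg _ _ hθ₁,
          ← ENNReal.rpow_mul, ← ENNReal.rpow_mul, ← ENNReal.rpow_mul, ← ENNReal.rpow_mul,
          mul_mul_mul_comm, ← ENNReal.rpow_add_of_nonneg _ _ (mul_nonneg hp' hθ₀)
            (mul_nonneg hq' hθ₁), ← mul_assoc]
        rw [show (2 - 1 / p) * (r / (r + s)) + (2 - 1 / q) * (1 - r / (r + s)) =
            2 - 1 / (r + s) * (r / p + s / q) by field_simp; ring,
          show 1 / p * (r / (r + s)) = r / (p * (r + s)) by field_simp,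
          show 1 / q * (1 - r / (r + s)) = s / (q * (r + s)) by field_simp; ring]

/-- Carlson type inequality for the Choquet integral of comonotone functions. -/
theorem carlson_choquet {X : Type*} [MeasurableSpace X]
    -- μ : F → [0,∞] is a monotone measure
    (μ : Set X → ℝ≥0∞)
    (hμ0 : μ ∅ = 0) (hμX : 0 < μ Set.univ)
    (hμmono : ∀ A B : Set X, MeasurableSet A → MeasurableSet B → A ⊆ B → μ A ≤ μ B)
    -- p, q ≥ 1 and r, s > 0
    (p q r s : ℝ) (hp : 1 ≤ p) (hq : 1 ≤ q) (hr : 0 < r) (hs : 0 < s)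
    -- f, g, h : X → [0,∞) measurable, f, g comonotone and f, h comonotone
    (f g h : X → ℝ≥0) (hf : Measurable f) (hg : Measurable g) (hh : Measurable h)
    (hfg : Comonotone f g) (hfh : Comonotone f h)
    -- A ∈ F with 0 < μ(A) < ∞, and f integrable on A
    (A : Set X) (hA : MeasurableSet A) (hA0 : 0 < μ A) (hAfin : μ A < ∞)
    (hfint : choquet μ (fun x => (f x : ℝ≥0∞)) A < ∞) :
    choquet μ (fun x => (f x : ℝ≥0∞)) A *
      (choquet μ (fun x => (g x : ℝ≥0∞)) A) ^ (r/(r+s)) *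
      (choquet μ (fun x => (h x : ℝ≥0∞)) A) ^ (s/(r+s)) ≤
    (μ A) ^ (2 - (1/(r+s)) * (r/p + s/q)) *
      (choquet μ (fun x => (f x : ℝ≥0∞) ^ p * (g x : ℝ≥0∞) ^ p) A) ^ (r/(p*(r+s))) *
      (choquet μ (fun x => (f x : ℝ≥0∞) ^ q * (h x : ℝ≥0∞) ^ q) A) ^ (s/(q*(r+s))) :=
  carlson_choquet_general μ hμmono p q r s hp hq hr hs f g h hf hg hh hfg hfh A hA hAfin
end

section
/- Let (X, F) be a measurable space and m : F → [0,∞] a monotone measure with m(X) = 1. Then for every c ≥ 1 and every measurable function f : X → [0,∞), the Jensen type inequality ((C)∫_X f dm)^c ≤ (C)∫_X f^c dm holds. -/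
/-!
Put `g t = m {f ≥ t}`, which takes values in `[0, 1]`, and `I = ∫₀^∞ g`. The substitution
`t = s ^ c` turns `(C)∫ f ^ c dm` into `∫₀^∞ w g` for the increasing weight `w s = c s^(c-1)`,
whose integral over `(0, I]` is `I ^ c`. Among functions `0 ≤ g ≤ 1` of mass `I`, `∫ w g` is
smallest for the indicator of `(0, I]` (bathtub principle): pointwise
`w (1_{(0,I]} - g) ≤ w I (1_{(0,I]} - g)`, and the right-hand side integrates to `0`.
-/

open scoped ENNReal

open MeasureTheory Set Real

theorem lintegral_comp_rpow_Ioi (g : ℝ → ℝ≥0∞) {p : ℝ} (hp : p ≠ 0) :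
    ∫⁻ x in Ioi 0, ENNReal.ofReal (|p| * x ^ (p - 1)) * g (x ^ p) = ∫⁻ y in Ioi 0, g y := by
  have himage : (· ^ p) '' Ioi 0 = Ioi (0 : ℝ) := by
    ext1 x; rw [mem_image]; constructor
    · rintro ⟨y, hy, rfl⟩; exact rpow_pos_of_pos hy p
    · exact fun hx ↦ ⟨x ^ (1 / p), rpow_pos_of_pos hx _, by simp [← rpow_mul hx.le, hp]⟩
  conv_rhs => rw [← himage]
  rw [lintegral_image_eq_lintegral_abs_deriv_mul measurableSet_Ioi
    (fun x hx ↦ (hasDerivAt_rpow_const (Or.inl (mem_Ioi.mp hx).ne')).hasDerivWithinAt)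
    ((rpow_left_injOn hp).mono fun x hx ↦ mem_Ici.2 (mem_Ioi.1 hx).le)]
  refine setLIntegral_congr_fun measurableSet_Ioi fun x hx ↦ ?_
  rw [abs_mul, abs_of_nonneg (rpow_nonneg (mem_Ioi.1 hx).le _)]

theorem lintegral_Ioc_ofReal_mul_rpow_sub_one {p a : ℝ} (hp : 0 < p) (ha : 0 ≤ a) :
    ∫⁻ x in Ioc 0 a, ENNReal.ofReal (p * x ^ (p - 1)) = ENNReal.ofReal (a ^ p) := by
  have hint : IntegrableOn (fun x : ℝ ↦ p * x ^ (p - 1)) (Ioc 0 a) := by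
    rw [← intervalIntegrable_iff_integrableOn_Ioc_of_le ha]
    exact (intervalIntegral.intervalIntegrable_rpow' (by linarith)).const_mul p
  have hnonneg : 0 ≤ᵐ[volume.restrict (Ioc 0 a)] fun x : ℝ ↦ p * x ^ (p - 1) := by
    filter_upwards [self_mem_ae_restrict measurableSet_Ioc] with x hx
    exact mul_nonneg hp.le (rpow_nonneg hx.1.le _)
  rw [← ofReal_integral_eq_lintegral_ofReal hint hnonneg, ← intervalIntegral.integral_of_le ha,
    intervalIntegral.integral_const_mul, integral_rpow (Or.inl (by linarith)), sub_add_cancel,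
    zero_rpow hp.ne', sub_zero, mul_div_cancel₀ _ hp.ne']

theorem ofReal_mul_rpow_sub_one_le_of_le {p x y : ℝ} (hp : 1 ≤ p) (hx : 0 ≤ x) (hxy : x ≤ y) :
    ENNReal.ofReal (p * x ^ (p - 1)) ≤ ENNReal.ofReal (p * y ^ (p - 1)) := by
  gcongr

section Bathtub

variable {g : ℝ → ℝ≥0∞} {p : ℝ}

theorem setLIntegral_Ioi_le_lintegral_ofReal_mul_rpow_mul_add_one (hg : ∀ t, g t ≤ 1)
    (hp : 1 ≤ p) :
    ∫⁻ t in Ioi 0, g t ≤ (∫⁻ x in Ioi 0, ENNReal.ofReal (p * x ^ (p - 1)) * g x) + 1 := by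
  have hpoint : ∀ x ∈ Ioi (0 : ℝ),
      g x ≤ ENNReal.ofReal (p * x ^ (p - 1)) * g x + (Iic 1).indicator 1 x := by
    intro x hx
    by_cases hx1 : x ≤ 1
    · simpa [hx1] using le_add_left (hg x)
    · have hw1 := ofReal_mul_rpow_sub_one_le_of_le hp zero_le_one (le_of_not_ge hx1)
      rw [one_rpow, mul_one] at hw1
      simpa [hx1] using le_mul_of_one_le_left' ((ENNReal.one_le_ofReal.2 hp).trans hw1)
  calc ∫⁻ t in Ioi 0, g t
      ≤ ∫⁻ x in Ioi 0, ENNReal.ofReal (p * x ^ (p - 1)) * g x + (Iic 1).indicator 1 x :=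
        setLIntegral_mono' measurableSet_Ioi hpoint
    _ = (∫⁻ x in Ioi 0, ENNReal.ofReal (p * x ^ (p - 1)) * g x) + 1 := by
        rw [lintegral_add_right _ (measurable_one.indicator measurableSet_Iic),
          lintegral_indicator_one measurableSet_Iic, Measure.restrict_apply measurableSet_Iic,
          Iic_inter_Ioi, Real.volume_Ioc, sub_zero, ENNReal.ofReal_one]

theorem rpow_setLIntegral_Ioi_le_of_ne_top (hg : ∀ t, g t ≤ 1)
    (hp : 1 ≤ p) (hI : ∫⁻ t in Ioi 0, g t ≠ ∞) :
    (∫⁻ t in Ioi 0, g t) ^ p ≤ ∫⁻ x in Ioi 0, ENNReal.ofReal (p * x ^ (p - 1)) * g x := by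
  set I := ∫⁻ t in Ioi 0, g t
  set a := I.toReal
  set w : ℝ → ℝ≥0∞ := fun x ↦ ENNReal.ofReal (p * x ^ (p - 1))
  have ha : 0 ≤ a := ENNReal.toReal_nonneg
  have hpoint : ∀ x ∈ Ioi (0 : ℝ),
      (Iic a).indicator w x + w a * g x ≤ w x * g x + w a * (Iic a).indicator 1 x := by
    -- `w (1_{≤ a} - g) ≤ w a (1_{≤ a} - g)`, rearranged to avoid subtraction in `ℝ≥0∞`
    intro x hx
    by_cases hxa : x ≤ a
    · have hwx : w x ≤ w a := ofReal_mul_rpow_sub_one_le_of_le hp (mem_Ioi.1 hx).le hxa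
      simp only [indicator_of_mem (mem_Iic.2 hxa), Pi.one_apply, mul_one]
      calc w x + w a * g x = w x * g x + (w x * (1 - g x) + w a * g x) := by
            rw [← add_assoc, ← mul_add, add_tsub_cancel_of_le (hg x), mul_one]
        _ ≤ w x * g x + (w a * (1 - g x) + w a * g x) := by gcongr
        _ = w x * g x + w a := by rw [← mul_add, tsub_add_cancel_of_le (hg x), mul_one]
    · have hwa : w a ≤ w x := ofReal_mul_rpow_sub_one_le_of_le hp ha (le_of_not_ge hxa)
      simp only [indicator_of_notMem (fun h ↦ hxa (mem_Iic.1 h)), mul_zero, zero_add, add_zero]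
      gcongr
  have hw : Measurable w := by fun_prop
  have hmono := setLIntegral_mono' (μ := volume) measurableSet_Ioi hpoint
  rw [lintegral_add_left (hw.indicator measurableSet_Iic), lintegral_add_right _
      ((measurable_one.indicator measurableSet_Iic).const_mul _),
    lintegral_const_mul' _ _ ENNReal.ofReal_ne_top,
    lintegral_const_mul' _ _ ENNReal.ofReal_ne_top,
    lintegral_indicator measurableSet_Iic, lintegral_indicator_one measurableSet_Iic,
    Measure.restrict_restrict measurableSet_Iic, Measure.restrict_apply measurableSet_Iic,
    Iic_inter_Ioi, Real.volume_Ioc, sub_zero, ENNReal.ofReal_toReal hI,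
    lintegral_Ioc_ofReal_mul_rpow_sub_one (by linarith) ha] at hmono
  rw [← ENNReal.ofReal_toReal hI, ENNReal.ofReal_rpow_of_nonneg ha (by linarith)]
  exact (ENNReal.add_le_add_iff_right (ENNReal.mul_ne_top ENNReal.ofReal_ne_top hI)).1 hmono

theorem rpow_setLIntegral_Ioi_le (hg : ∀ t, g t ≤ 1) (hp : 1 ≤ p) :
    (∫⁻ t in Ioi 0, g t) ^ p ≤ ∫⁻ x in Ioi 0, ENNReal.ofReal (p * x ^ (p - 1)) * g x := by
  by_cases hI : ∫⁻ t in Ioi 0, g t = ∞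
  · have := setLIntegral_Ioi_le_lintegral_ofReal_mul_rpow_mul_add_one hg hp
    rw [hI, top_le_iff, ENNReal.add_eq_top] at this
    rw [this.resolve_right ENNReal.one_ne_top]
    exact le_top
  · exact rpow_setLIntegral_Ioi_le_of_ne_top hg hp hI

end Bathtub

theorem choquet_rpow {X : Type*} (μ : Set X → ℝ≥0∞) (f : X → ℝ≥0∞) (A : Set X) {c : ℝ}
    (hc : 0 < c) :
    choquet μ (fun x ↦ f x ^ c) A
      = ∫⁻ s in Ioi 0, ENNReal.ofReal (c * s ^ (c - 1)) * μ (A ∩ {x | ENNReal.ofReal s ≤ f x}) := by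
  rw [choquet, ← lintegral_comp_rpow_Ioi _ hc.ne', abs_of_pos hc]
  refine setLIntegral_congr_fun measurableSet_Ioi fun s hs ↦ ?_
  simp only [← ENNReal.ofReal_rpow_of_nonneg (mem_Ioi.1 hs).le hc.le,
    ENNReal.rpow_le_rpow_iff hc]

theorem jensen_type_choquet_general {X : Type*} [MeasurableSpace X]
    -- m : F → [0,∞] is a monotone measure with m(X) = 1
    (m : Set X → ℝ≥0∞)
    (hmX : m Set.univ = 1)
    (hmmono : ∀ A B : Set X, MeasurableSet A → MeasurableSet B → A ⊆ B → m A ≤ m B)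
    -- c ≥ 1 and f : X → [0,∞) measurable
    (c : ℝ) (hc : 1 ≤ c)
    (f : X → ℝ≥0∞) (hf : Measurable f) :
    (choquet m f Set.univ) ^ c ≤ choquet m (fun x => f x ^ c) Set.univ := by
  have hlevel_le_one (t : ℝ) : m (univ ∩ {x | ENNReal.ofReal t ≤ f x}) ≤ 1 :=
    hmX ▸ hmmono _ _ (MeasurableSet.univ.inter (measurableSet_le measurable_const hf)) .univ
      (subset_univ _)
  rw [choquet_rpow m f univ (by linarith)]
  exact rpow_setLIntegral_Ioi_le hlevel_le_one hc

/-- Jensen type inequality for the Choquet integral with respect to a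
monotone measure `m` with `m(X) = 1`: for `c ≥ 1`,
`((C)∫_X f dm)^c ≤ (C)∫_X f^c dm`. -/
theorem jensen_type_choquet {X : Type*} [MeasurableSpace X]
    -- m : F → [0,∞] is a monotone measure with m(X) = 1
    (m : Set X → ℝ≥0∞)
    (hm0 : m ∅ = 0) (hmX : m Set.univ = 1)
    (hmmono : ∀ A B : Set X, MeasurableSet A → MeasurableSet B → A ⊆ B → m A ≤ m B)
    -- c ≥ 1 and f : X → [0,∞) measurable
    (c : ℝ) (hc : 1 ≤ c)
    (f : X → ℝ≥0∞) (hf : Measurable f) (hfin : ∀ x, f x ≠ ∞) :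
    (choquet m f Set.univ) ^ c ≤ choquet m (fun x => f x ^ c) Set.univ :=
  jensen_type_choquet_general m hmX hmmono c hc f hf
end

section
/- Let (X, F) be a measurable space and m : F → [0,∞] a monotone measure with m(X) = 1. Then for all comonotone measurable functions f, g : X → [0,∞), the Chebyshev type inequality (C)∫_X f g dm ≥ ((C)∫_X f dm) · ((C)∫_X g dm) holds. -/
open scoped ENNReal NNReal

open MeasureTheory Set

lemma key_vol {B C : Set ℝ} (A : Set ℝ)
    (hC : ∀ ⦃s' s : ℝ⦄, s' ≤ s → s ∈ C → s' ∈ C)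
    (hmul : ∀ s t : ℝ, 0 < s → 0 < t → s ∈ A → t ∈ B → s * t ∈ C) :
    volume (A ∩ Set.Ioi 0) * volume (B ∩ Set.Ioi 0) ≤ volume (C ∩ Set.Ioi 0) := by
  rcases (A ∩ Set.Ioi 0).eq_empty_or_nonempty with hAe | ⟨s₀, hs₀A, hs₀⟩
  · simp [hAe]
  rcases (B ∩ Set.Ioi 0).eq_empty_or_nonempty with hBe | ⟨t₀, ht₀B, ht₀⟩
  · simp [hBe]
  simp only [Set.mem_Ioi] at hs₀ ht₀
  by_cases hAb : BddAbove (A ∩ Set.Ioi 0)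
  · by_cases hBb : BddAbove (B ∩ Set.Ioi 0)
    · -- bounded case
      set a := sSup (A ∩ Set.Ioi 0) with ha
      set b := sSup (B ∩ Set.Ioi 0) with hb
      have ha0 : 0 < a := lt_of_lt_of_le hs₀ (le_csSup hAb ⟨hs₀A, hs₀⟩)
      have hb0 : 0 < b := lt_of_lt_of_le ht₀ (le_csSup hBb ⟨ht₀B, ht₀⟩)
      have hAsub : A ∩ Set.Ioi 0 ⊆ Set.Ioc 0 a := fun s hs => ⟨hs.2, le_csSup hAb hs⟩
      have hBsub : B ∩ Set.Ioi 0 ⊆ Set.Ioc 0 b := fun s hs => ⟨hs.2, le_csSup hBb hs⟩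
      have hCsup : Set.Ioo 0 (a*b) ⊆ C ∩ Set.Ioi 0 := by
        rintro u ⟨hu0, hu⟩
        have h1 : u / b < a := (div_lt_iff₀ hb0).2 hu
        rw [ha] at h1
        obtain ⟨s, hsA, hs⟩ := exists_lt_of_lt_csSup (⟨s₀, Set.mem_inter hs₀A (Set.mem_Ioi.2 hs₀)⟩ : (A ∩ Set.Ioi 0).Nonempty) h1
        have hspos : 0 < s := hsA.2
        have h2 : u / s < b := by
          rw [div_lt_iff₀ hspos]
          calc u < s * b := (div_lt_iff₀ hb0).1 hs
          _ = b * s := mul_comm _ _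
        rw [hb] at h2
        obtain ⟨t, htB, ht⟩ := exists_lt_of_lt_csSup (⟨t₀, Set.mem_inter ht₀B (Set.mem_Ioi.2 ht₀)⟩ : (B ∩ Set.Ioi 0).Nonempty) h2
        have htpos : 0 < t := htB.2
        have : u < s * t := by
          calc u = (u / s) * s := (div_mul_cancel₀ u hspos.ne').symm
          _ < t * s := by exact mul_lt_mul_of_pos_right ht hspos
          _ = s * t := mul_comm _ _
        exact ⟨hC this.le (hmul s t hspos htpos hsA.1 htB.1), hu0⟩
      calc volume (A ∩ Set.Ioi 0) * volume (B ∩ Set.Ioi 0)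
          ≤ volume (Set.Ioc 0 a) * volume (Set.Ioc 0 b) :=
            mul_le_mul' (measure_mono hAsub) (measure_mono hBsub)
        _ = ENNReal.ofReal (a * b) := by
            rw [Real.volume_Ioc, Real.volume_Ioc, sub_zero, sub_zero, ← ENNReal.ofReal_mul ha0.le]
        _ = volume (Set.Ioo 0 (a*b)) := by rw [Real.volume_Ioo, sub_zero]
        _ ≤ volume (C ∩ Set.Ioi 0) := measure_mono hCsup
    · -- B unbounded
      have : Set.Ioi 0 ⊆ C ∩ Set.Ioi 0 := by
        intro u hu
        simp only [Set.mem_Ioi] at hu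
        obtain ⟨t, htB, ht⟩ := not_bddAbove_iff.1 hBb (u / s₀)
        have htpos : 0 < t := htB.2
        have : u < s₀ * t := by
          rw [mul_comm, ← div_lt_iff₀ hs₀]; exact ht
        exact ⟨hC this.le (hmul s₀ t hs₀ htpos hs₀A htB.1), hu⟩
      have h2 : volume (Set.Ioi (0:ℝ)) ≤ volume (C ∩ Set.Ioi 0) := measure_mono this
      rw [Real.volume_Ioi] at h2
      exact le_trans le_top h2
  · -- A unbounded
    have : Set.Ioi 0 ⊆ C ∩ Set.Ioi 0 := by
      intro u hu
      simp only [Set.mem_Ioi] at hu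
      obtain ⟨s, hsA, hs⟩ := not_bddAbove_iff.1 hAb (u / t₀)
      have hspos : 0 < s := hsA.2
      have : u < s * t₀ := by
        rw [← div_lt_iff₀ ht₀]; exact hs
      exact ⟨hC this.le (hmul s t₀ hspos ht₀ hsA.1 ht₀B), hu⟩
    have h2 : volume (Set.Ioi (0:ℝ)) ≤ volume (C ∩ Set.Ioi 0) := measure_mono this
    rw [Real.volume_Ioi] at h2
    exact le_trans le_top h2



/-- Chebyshev type inequality for the Choquet integral of comonotone functions
with respect to a monotone measure `m` with `m(X) = 1`:
`(C)∫_X fg dm ≥ ((C)∫_X f dm) ((C)∫_X g dm)`. -/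
theorem chebyshev_type_choquet {X : Type*} [MeasurableSpace X]
    -- m : F → [0,∞] is a monotone measure with m(X) = 1
    (m : Set X → ℝ≥0∞)
    (hm0 : m ∅ = 0) (hmX : m Set.univ = 1)
    (hmmono : ∀ A B : Set X, MeasurableSet A → MeasurableSet B → A ⊆ B → m A ≤ m B)
    -- f, g : X → [0,∞) comonotone measurable
    (f g : X → ℝ≥0) (hf : Measurable f) (hg : Measurable g)
    (hfg : Comonotone f g) :
    choquet m (fun x => (f x : ℝ≥0∞)) Set.univ *
        choquet m (fun x => (g x : ℝ≥0∞)) Set.univ ≤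
      choquet m (fun x => (f x : ℝ≥0∞) * (g x : ℝ≥0∞)) Set.univ := by
  classical
  set Sf : ℝ → Set X := fun s => {x | ENNReal.ofReal s ≤ (f x : ℝ≥0∞)} with hSf
  set Sg : ℝ → Set X := fun t => {x | ENNReal.ofReal t ≤ (g x : ℝ≥0∞)} with hSg
  set Sfg : ℝ → Set X := fun u => {x | ENNReal.ofReal u ≤ (f x : ℝ≥0∞) * (g x : ℝ≥0∞)} with hSfg
  -- measurability of level sets
  have hSfm : ∀ s, MeasurableSet (Sf s) := by
    intro s
    have : Sf s = f ⁻¹' (Set.Ici (Real.toNNReal s)) := by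
      ext x; simp [hSf, ENNReal.ofReal, ENNReal.coe_le_coe]
    rw [this]; exact hf measurableSet_Ici
  have hSgm : ∀ t, MeasurableSet (Sg t) := by
    intro t
    have : Sg t = g ⁻¹' (Set.Ici (Real.toNNReal t)) := by
      ext x; simp [hSg, ENNReal.ofReal, ENNReal.coe_le_coe]
    rw [this]; exact hg measurableSet_Ici
  have hSfgm : ∀ u, MeasurableSet (Sfg u) := by
    intro u
    have : Sfg u = (fun x => f x * g x) ⁻¹' (Set.Ici (Real.toNNReal u)) := by
      ext x; simp [hSfg, ENNReal.ofReal, ← ENNReal.coe_mul, ENNReal.coe_le_coe]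
    rw [this]; exact (hf.mul hg) measurableSet_Ici
  set F : ℝ → ℝ≥0∞ := fun s => m (Sf s) with hF
  set G : ℝ → ℝ≥0∞ := fun t => m (Sg t) with hG
  set H : ℝ → ℝ≥0∞ := fun u => m (Sfg u) with hH
  have hF1 : ∀ s, F s ≤ 1 := fun s =>
    hmX ▸ hmmono _ _ (hSfm s) MeasurableSet.univ (Set.subset_univ _)
  have hG1 : ∀ t, G t ≤ 1 := fun t =>
    hmX ▸ hmmono _ _ (hSgm t) MeasurableSet.univ (Set.subset_univ _)
  have hH1 : ∀ u, H u ≤ 1 := fun u =>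
    hmX ▸ hmmono _ _ (hSfgm u) MeasurableSet.univ (Set.subset_univ _)
  have hFne : ∀ s, F s ≠ ⊤ := fun s => ((hF1 s).trans_lt ENNReal.one_lt_top).ne
  have hGne : ∀ t, G t ≠ ⊤ := fun t => ((hG1 t).trans_lt ENNReal.one_lt_top).ne
  have hHne : ∀ u, H u ≠ ⊤ := fun u => ((hH1 u).trans_lt ENNReal.one_lt_top).ne
  have hFanti : Antitone F := by
    intro s s' h
    exact hmmono _ _ (hSfm s') (hSfm s)
      (fun x hx => le_trans (ENNReal.ofReal_le_ofReal h) hx)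
  have hGanti : Antitone G := by
    intro s s' h
    exact hmmono _ _ (hSgm s') (hSgm s)
      (fun x hx => le_trans (ENNReal.ofReal_le_ofReal h) hx)
  have hHanti : Antitone H := by
    intro s s' h
    exact hmmono _ _ (hSfgm s') (hSfgm s)
      (fun x hx => le_trans (ENNReal.ofReal_le_ofReal h) hx)
  have hFmeas : Measurable F := hFanti.measurable
  have hGmeas : Measurable G := hGanti.measurable
  -- real-valued versions
  set φF : ℝ → ℝ := fun s => (F s).toReal with hφF
  set φG : ℝ → ℝ := fun t => (G t).toReal with hφG
  set φH : ℝ → ℝ := fun u => (H u).toReal with hφH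
  have hφFanti : Antitone φF := fun s s' h => ENNReal.toReal_mono (hFne s) (hFanti h)
  have hφGanti : Antitone φG := fun s s' h => ENNReal.toReal_mono (hGne s) (hGanti h)
  have hφHanti : Antitone φH := fun s s' h => ENNReal.toReal_mono (hHne s) (hHanti h)
  have hφFm : Measurable φF := hφFanti.measurable
  have hφGm : Measurable φG := hφGanti.measurable
  have hφHm : Measurable φH := hφHanti.measurable
  have hFof : ∀ s, F s = ENNReal.ofReal (φF s) := fun s => (ENNReal.ofReal_toReal (hFne s)).symm
  have hGof : ∀ t, G t = ENNReal.ofReal (φG t) := fun t => (ENNReal.ofReal_toReal (hGne t)).symm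
  have hHof : ∀ u, H u = ENNReal.ofReal (φH u) := fun u => (ENNReal.ofReal_toReal (hHne u)).symm
  -- comonotone chain
  have hchain : ∀ s t : ℝ, Sf s ⊆ Sg t ∨ Sg t ⊆ Sf s := by
    intro s t
    by_contra h
    push_neg at h
    obtain ⟨h1, h2⟩ := h
    obtain ⟨x, hx1, hx2⟩ := Set.not_subset.1 h1
    obtain ⟨y, hy1, hy2⟩ := Set.not_subset.1 h2
    simp only [hSf, hSg, Set.mem_setOf_eq, ENNReal.ofReal, ENNReal.coe_le_coe,
      Real.toNNReal_le_iff_le_coe, not_le] at hx1 hx2 hy1 hy2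
    have := hfg x y
    nlinarith [hx1, hx2, hy1, hy2, this]
  -- minimum bound
  have hmin : ∀ s t : ℝ, 0 ≤ s → 0 ≤ t → min (F s) (G t) ≤ H (s * t) := by
    intro s t hs ht
    have hsub : Sf s ∩ Sg t ⊆ Sfg (s * t) := by
      rintro x ⟨hx1, hx2⟩
      simp only [hSfg, Set.mem_setOf_eq]
      calc ENNReal.ofReal (s * t) = ENNReal.ofReal s * ENNReal.ofReal t :=
            ENNReal.ofReal_mul hs
        _ ≤ (f x : ℝ≥0∞) * (g x : ℝ≥0∞) := mul_le_mul' hx1 hx2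
    rcases hchain s t with h | h
    · exact le_trans (min_le_left _ _)
        (hmmono _ _ (hSfm s) (hSfgm _) (fun x hx => hsub ⟨hx, h hx⟩))
    · exact le_trans (min_le_right _ _)
        (hmmono _ _ (hSgm t) (hSfgm _) (fun x hx => hsub ⟨h hx, hx⟩))
  -- the measure on (0,∞)
  set μ : Measure ℝ := volume.restrict (Set.Ioi 0) with hμ
  have goal_eq : choquet m (fun x => (f x : ℝ≥0∞)) Set.univ = ∫⁻ s, F s ∂μ := by
    simp only [choquet, Set.univ_inter, hμ, hF, hSf]
  have goal_eq2 : choquet m (fun x => (g x : ℝ≥0∞)) Set.univ = ∫⁻ t, G t ∂μ := by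
    simp only [choquet, Set.univ_inter, hμ, hG, hSg]
  have goal_eq3 : choquet m (fun x => (f x : ℝ≥0∞) * (g x : ℝ≥0∞)) Set.univ
      = ∫⁻ u, H u ∂μ := by
    simp only [choquet, Set.univ_inter, hμ, hH, hSfg]
  rw [goal_eq, goal_eq2, goal_eq3]
  -- min of the real versions
  set ψ : ℝ × ℝ → ℝ := fun p => min (φF p.1) (φG p.2) with hψ
  have hψm : Measurable ψ := (hφFm.comp measurable_fst).min (hφGm.comp measurable_snd)
  calc (∫⁻ s, F s ∂μ) * ∫⁻ t, G t ∂μ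
      = ∫⁻ s, F s * ∫⁻ t, G t ∂μ ∂μ := (lintegral_mul_const'' _ hFmeas.aemeasurable).symm
    _ = ∫⁻ s, ∫⁻ t, F s * G t ∂μ ∂μ := by
        refine lintegral_congr fun s => ?_
        rw [lintegral_const_mul' _ _ (hFne s)]
    _ ≤ ∫⁻ s, ∫⁻ t, min (F s) (G t) ∂μ ∂μ := by
        refine lintegral_mono fun s => lintegral_mono fun t => ?_
        refine le_min ?_ ?_
        · calc F s * G t ≤ F s * 1 := mul_le_mul_right (hG1 t) _
            _ = F s := mul_one _
        · calc F s * G t ≤ 1 * G t := mul_le_mul_left (hF1 s) _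
            _ = G t := one_mul _
    _ = ∫⁻ p, min (F p.1) (G p.2) ∂(μ.prod μ) := by
        exact (lintegral_prod (fun p => min (F p.1) (G p.2))
          ((hFmeas.comp measurable_fst).min
          (hGmeas.comp measurable_snd)).aemeasurable).symm
    _ = ∫⁻ p, ENNReal.ofReal (ψ p) ∂(μ.prod μ) := by
        refine lintegral_congr fun p => ?_
        rw [hFof p.1, hGof p.2, hψ]
        exact (Monotone.map_min (fun a b h => ENNReal.ofReal_le_ofReal h)).symm
    _ = ∫⁻ r in Set.Ioi 0, (μ.prod μ) {p | r ≤ ψ p} := by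
        exact lintegral_eq_lintegral_meas_le (μ.prod μ)
          (ae_of_all _ fun p => le_min ENNReal.toReal_nonneg ENNReal.toReal_nonneg)
          hψm.aemeasurable
    _ ≤ ∫⁻ r in Set.Ioi 0, μ {u | r ≤ φH u} := by
        refine lintegral_mono_ae ((ae_restrict_iff' measurableSet_Ioi).2
          (ae_of_all _ fun r hr => ?_))
        have hset : {p : ℝ × ℝ | r ≤ ψ p} = {s | r ≤ φF s} ×ˢ {t | r ≤ φG t} := by
          ext p
          simp only [hψ, Set.mem_setOf_eq, Set.mem_prod, le_min_iff]
        rw [hset, Measure.prod_prod, hμ, Measure.restrict_apply' measurableSet_Ioi,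
          Measure.restrict_apply' measurableSet_Ioi,
          Measure.restrict_apply' measurableSet_Ioi]
        refine key_vol {s | r ≤ φF s} (fun u' u h hu => le_trans hu (hφHanti h)) ?_
        intro s t hs ht hsA htB
        have h1 := hmin s t hs.le ht.le
        show r ≤ φH (s * t)
        rcases min_cases (F s) (G t) with ⟨he, _⟩ | ⟨he, _⟩
        · exact le_trans hsA (ENNReal.toReal_mono (hHne _) (he ▸ h1))
        · exact le_trans htB (ENNReal.toReal_mono (hHne _) (he ▸ h1))
    _ = ∫⁻ u, ENNReal.ofReal (φH u) ∂μ :=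
        (lintegral_eq_lintegral_meas_le μ
          (ae_of_all _ fun u => ENNReal.toReal_nonneg) hφHm.aemeasurable).symm
    _ = ∫⁻ u, H u ∂μ := lintegral_congr fun u => (hHof u).symm
end

section
/- Let A be a nonempty set and let φ, ψ : A → [0,∞) be comonotone functions. Then sup_{x ∈ A} (φ(x)ψ(x)) = (sup_{x ∈ A} φ(x)) · (sup_{x ∈ A} ψ(x)), where suprema are taken in [0,∞] and 0 · ∞ = 0. -/
open scoped ENNReal NNReal

/-- For comonotone functions `φ, ψ : A → [0,∞)` on a nonempty set `A`,
`sup (φψ) = (sup φ)(sup ψ)`, where the suprema are taken in `[0,∞]`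
(so that `0 · ∞ = 0`). -/
theorem iSup_mul_of_comonotone {A : Type*} [Nonempty A]
    (φ ψ : A → ℝ≥0)
    (hcom : ∀ x y, 0 ≤ ((φ x : ℝ) - (φ y : ℝ)) * ((ψ x : ℝ) - (ψ y : ℝ))) :
    (⨆ x, (φ x : ℝ≥0∞) * (ψ x : ℝ≥0∞)) =
      (⨆ x, (φ x : ℝ≥0∞)) * ⨆ x, (ψ x : ℝ≥0∞) := by
  refine le_antisymm (iSup_le fun x => mul_le_mul' (le_iSup (fun x => (φ x : ℝ≥0∞)) x) (le_iSup (fun x => (ψ x : ℝ≥0∞)) x)) ?_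
  rw [ENNReal.iSup_mul]
  refine iSup_le fun x => ?_
  rw [ENNReal.mul_iSup]
  refine iSup_le fun y => ?_
  rcases le_or_gt (φ x) (φ y) with h | h
  · exact le_iSup_of_le y
      (mul_le_mul' (ENNReal.coe_le_coe.mpr h) le_rfl)
  · have h' : ψ y ≤ ψ x := by
      have := hcom x y
      have hφ : (0:ℝ) < (φ x : ℝ) - (φ y : ℝ) := by
        have := NNReal.coe_lt_coe.mpr h; linarith
      exact NNReal.coe_le_coe.mp (by nlinarith)
    exact le_iSup_of_le x
      (mul_le_mul' le_rfl (ENNReal.coe_le_coe.mpr h'))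
end

section
/- Let (X, F) be a measurable space and μ : F → [0,∞] a submodular monotone measure. Let p > 1 and q satisfy 1/p + 1/q = 1, let A ∈ F, and let f, g, h : X → [0,∞) be measurable functions. Set a = (C)∫_A g f^p dμ and b = (C)∫_A h f^p dμ, and assume 0 < a < ∞ and 0 < b < ∞. Then (C)∫_A f dμ ≤ 2^{1/p} · (ab)^{1/p} · ((C)∫_A (b·g + a·h)^{−(q−1)} dμ)^{1/q}, where (b·g + a·h)^{−(q−1)} denotes the function x ↦ 1/(b·g(x) + a·h(x))^{q−1} (with value ∞ where b·g(x) + a·h(x) = 0). -/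
open scoped ENNReal NNReal

/-!
Put `w = b g + a h`. Since `w f^p = b (g f^p) + a (h f^p)`, subadditivity and positive
homogeneity of the Choquet integral give `(C)∫_A w f^p dμ ≤ 2ab`, and Hölder's inequality for
`f = (w^(1/p) f) w^(-1/p)` (off `{w = 0}`, which is null once `(C)∫_A w^(-(q-1)) dμ < ∞`) gives
`(C)∫_A f dμ ≤ ((C)∫_A w f^p dμ)^(1/p) ((C)∫_A w^(-(q-1)) dμ)^(1/q)`. Hölder itself follows from
Young's inequality `uv ≤ (Lu)^p/p + (v/L)^q/q`, subadditivity, and the choice of `L` balancing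
the two terms.

Subadditivity is where submodularity enters. Adding a layer `c 1_T` to `F` turns the level set
`{F ≥ t}` into `{F ≥ t} ∪ (T ∩ {F ≥ t - c})`, and submodularity for `{F ≥ t} ∪ T` and
`{F ≥ t - c}`, integrated in `t`, gives `(C)∫(F + c 1_T) ≤ (C)∫F + c μ(A ∩ T)`. A general `G`
is approximated within `η` by layers `η 1_{G ≥ (i+1)η}`, whose masses form a lower Riemann sum
of `(C)∫G`; the error only affects the levels in `(0, η]`, whose contribution vanishes as
`η → 0`.
-/

open MeasureTheory Set Filter Topology

lemma setLIntegral_Ioc_eq_add {f : ℝ → ℝ≥0∞} {a b c : ℝ} (hab : a ≤ b) (hbc : b ≤ c) :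
    ∫⁻ t in Ioc a c, f t = (∫⁻ t in Ioc a b, f t) + ∫⁻ t in Ioc b c, f t := by
  rw [← Ioc_union_Ioc_eq_Ioc hab hbc,
    lintegral_union measurableSet_Ioc (Ioc_disjoint_Ioc_of_le le_rfl)]

lemma setLIntegral_Ioi_eq_add {f : ℝ → ℝ≥0∞} {a b : ℝ} (hab : a ≤ b) :
    ∫⁻ t in Ioi a, f t = (∫⁻ t in Ioc a b, f t) + ∫⁻ t in Ioi b, f t := by
  rw [← Ioc_union_Ioi_eq_Ioi hab, lintegral_union measurableSet_Ioi Ioc_disjoint_Ioi_same]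

lemma setLIntegral_Ioi_eq_iSup_Ioc (f : ℝ → ℝ≥0∞) :
    ∫⁻ t in Ioi 0, f t = ⨆ n : ℕ, ∫⁻ t in Ioc 0 (n : ℝ), f t := by
  rw [← setLIntegral_iUnion_of_directed f
    (Monotone.directed_le fun m n hmn => Ioc_subset_Ioc_right (Nat.cast_le.2 hmn)),
    iUnion_Ioc_eq_Ioi_self_iff.2 fun x _ => exists_nat_ge x]

lemma setLIntegral_Ioc_comp_add_right (f : ℝ → ℝ≥0∞) (a b c : ℝ) :
    ∫⁻ t in Ioc a b, f (t + c) = ∫⁻ t in Ioc (a + c) (b + c), f t := by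
  have := (measurePreserving_add_right volume c).setLIntegral_comp_preimage_emb
    (measurableEmbedding_addRight c) f (Ioc (a + c) (b + c))
  rwa [preimage_add_const_Ioc, add_sub_cancel_right, add_sub_cancel_right] at this

lemma setLIntegral_Ioi_comp_add_right (f : ℝ → ℝ≥0∞) (c : ℝ) :
    ∫⁻ t in Ioi 0, f (t + c) = ∫⁻ t in Ioi c, f t := by
  have := (measurePreserving_add_right volume c).setLIntegral_comp_preimage_emb
    (measurableEmbedding_addRight c) f (Ioi c)
  rwa [preimage_add_const_Ioi, sub_self] at this

lemma setLIntegral_Ioi_comp_mul_left (f : ℝ → ℝ≥0∞) {c : ℝ} (hc : 0 < c) :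
    ∫⁻ t in Ioi 0, f (c * t) = ENNReal.ofReal c⁻¹ * ∫⁻ t in Ioi 0, f t := by
  have he := measurableEmbedding_mulLeft₀ hc.ne'
  calc ∫⁻ t in Ioi 0, f (c * t) = ∫⁻ t in (c * ·) ⁻¹' Ioi 0, f (c * t) := by
        rw [preimage_const_mul_Ioi₀ 0 hc, zero_div]
    _ = ∫⁻ t in Ioi 0, f t ∂(Measure.map (c * ·) volume) := by
        rw [he.restrict_map, he.lintegral_map]
    _ = ENNReal.ofReal c⁻¹ * ∫⁻ t in Ioi 0, f t := by
        rw [Real.map_volume_mul_left hc.ne', Measure.restrict_smul, lintegral_smul_measure,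
          abs_of_pos (inv_pos.2 hc), smul_eq_mul]

section SetFunction

variable {X : Type*} {μ : Set X → ℝ≥0∞} {A : Set X} {k k₁ k₂ : X → ℝ≥0∞}

def superlevel (A : Set X) (k : X → ℝ≥0∞) (t : ℝ) : Set X :=
  A ∩ {x | ENNReal.ofReal t ≤ k x}

lemma choquet_eq_lintegral_superlevel (μ : Set X → ℝ≥0∞) (k : X → ℝ≥0∞) (A : Set X) :
    choquet μ k A = ∫⁻ t in Ioi 0, μ (superlevel A k t) :=
  rfl

lemma superlevel_antitone (A : Set X) (k : X → ℝ≥0∞) : Antitone (superlevel A k) :=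
  fun _ _ hst => inter_subset_inter_right A fun _ hx =>
    (ENNReal.ofReal_le_ofReal hst).trans hx

lemma superlevel_of_nonpos (A : Set X) (k : X → ℝ≥0∞) {t : ℝ} (ht : t ≤ 0) :
    superlevel A k t = A := by
  simp [superlevel, ENNReal.ofReal_of_nonpos ht]

lemma choquet_const_mul {c : ℝ≥0∞} (hc₀ : c ≠ 0) (hc : c ≠ ∞) :
    choquet μ (fun x => c * k x) A = c * choquet μ k A := by
  have hc' : 0 < c.toReal := ENNReal.toReal_pos hc₀ hc
  have hlevel : ∀ t, superlevel A (fun x => c * k x) t = superlevel A k (c.toReal⁻¹ * t) := by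
    intro t
    ext x
    simp only [superlevel, mem_inter_iff, mem_ofPred_eq, ENNReal.ofReal_mul (inv_pos.2 hc').le,
      ENNReal.ofReal_inv_of_pos hc', ENNReal.ofReal_toReal hc, ← ENNReal.div_eq_inv_mul,
      ENNReal.div_le_iff_le_mul (.inl hc₀) (.inl hc), mul_comm (k x)]
  simp only [choquet_eq_lintegral_superlevel, hlevel,
    setLIntegral_Ioi_comp_mul_left (fun t => μ (superlevel A k t)) (inv_pos.2 hc'), inv_inv,
    ENNReal.ofReal_toReal hc]

variable [MeasurableSpace X]

def MonotoneOnMeasurable (μ : Set X → ℝ≥0∞) : Prop :=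
  ∀ A B : Set X, MeasurableSet A → MeasurableSet B → A ⊆ B → μ A ≤ μ B

def SubmodularOnMeasurable (μ : Set X → ℝ≥0∞) : Prop :=
  ∀ A B : Set X, MeasurableSet A → MeasurableSet B → μ (A ∩ B) + μ (A ∪ B) ≤ μ A + μ B

lemma SubmodularOnMeasurable.union_le (hμ : SubmodularOnMeasurable μ) {S T : Set X}
    (hS : MeasurableSet S) (hT : MeasurableSet T) : μ (S ∪ T) ≤ μ S + μ T :=
  le_add_self.trans (hμ S T hS hT)

lemma measurableSet_superlevel (hA : MeasurableSet A) (hk : Measurable k) (t : ℝ) :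
    MeasurableSet (superlevel A k t) :=
  hA.inter (hk measurableSet_Ici)

lemma antitone_measure_superlevel (hμ : MonotoneOnMeasurable μ) (hA : MeasurableSet A)
    (hk : Measurable k) : Antitone fun t => μ (superlevel A k t) :=
  fun s t hst => hμ _ _ (measurableSet_superlevel hA hk t) (measurableSet_superlevel hA hk s)
    (superlevel_antitone A k hst)

lemma choquet_mono (hμ : MonotoneOnMeasurable μ) (hA : MeasurableSet A) (hk₁ : Measurable k₁)
    (hk₂ : Measurable k₂) (h : ∀ x, k₁ x ≤ k₂ x) : choquet μ k₁ A ≤ choquet μ k₂ A :=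
  lintegral_mono fun t => hμ _ _ (measurableSet_superlevel hA hk₁ t)
    (measurableSet_superlevel hA hk₂ t) (inter_subset_inter_right A fun _ hx => hx.trans (h _))

lemma mul_measure_superlevel_le_setLIntegral (hμ : MonotoneOnMeasurable μ)
    (hA : MeasurableSet A) (hk : Measurable k) (a b : ℝ) :
    ENNReal.ofReal (b - a) * μ (superlevel A k b) ≤ ∫⁻ t in Ioc a b, μ (superlevel A k t) := by
  rw [mul_comm, ← Real.volume_Ioc, ← setLIntegral_const]
  exact setLIntegral_mono ((antitone_measure_superlevel hμ hA hk).measurable)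
    fun t ht => antitone_measure_superlevel hμ hA hk ht.2

lemma mul_measure_superlevel_le_choquet (hμ : MonotoneOnMeasurable μ) (hA : MeasurableSet A)
    (hk : Measurable k) (s : ℝ) : ENNReal.ofReal s * μ (superlevel A k s) ≤ choquet μ k A := by
  calc ENNReal.ofReal s * μ (superlevel A k s)
      = ENNReal.ofReal (s - 0) * μ (superlevel A k s) := by rw [sub_zero]
    _ ≤ ∫⁻ t in Ioc 0 s, μ (superlevel A k t) :=
        mul_measure_superlevel_le_setLIntegral hμ hA hk 0 s
    _ ≤ choquet μ k A := lintegral_mono_set Ioc_subset_Ioi_self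

lemma tendsto_measure_superlevel_atTop (hμ : MonotoneOnMeasurable μ) (hA : MeasurableSet A)
    (hk : Measurable k) (hfin : choquet μ k A ≠ ∞) :
    Tendsto (fun t => μ (superlevel A k t)) atTop (𝓝 0) := by
  have hbound : Tendsto (fun t => choquet μ k A / ENNReal.ofReal t) atTop (𝓝 0) := by
    simpa using ENNReal.Tendsto.const_div ENNReal.tendsto_ofReal_atTop (.inr hfin)
  refine tendsto_of_tendsto_of_tendsto_of_le_of_le' tendsto_const_nhds hbound
    (Eventually.of_forall fun _ => zero_le) ?_
  filter_upwards [eventually_gt_atTop 0] with t ht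
  rw [ENNReal.le_div_iff_mul_le (.inl (by simpa using ht)) (.inl ENNReal.ofReal_ne_top), mul_comm]
  exact mul_measure_superlevel_le_choquet hμ hA hk t

lemma measure_inter_eq_zero_of_choquet_ne_top (hμ : MonotoneOnMeasurable μ)
    (hA : MeasurableSet A) (hk : Measurable k) (hfin : choquet μ k A ≠ ∞) {N : Set X}
    (hN : MeasurableSet N) (hkN : ∀ x ∈ N, k x = ∞) : μ (A ∩ N) = 0 := by
  by_contra hne
  refine hfin (eq_top_iff.2 ?_)
  calc ∞ = ∫⁻ _ in Ioi (0 : ℝ), μ (A ∩ N) := by simp [hne]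
    _ ≤ choquet μ k A := lintegral_mono fun t => hμ _ _ (hA.inter hN)
        (measurableSet_superlevel hA hk t)
        (inter_subset_inter_right A fun x hx => by simp [hkN x hx])

lemma choquet_le_of_le_off_null (hμ : MonotoneOnMeasurable μ) (hμs : SubmodularOnMeasurable μ)
    (hA : MeasurableSet A) (hk₁ : Measurable k₁) (hk₂ : Measurable k₂) {N : Set X}
    (hN : MeasurableSet N) (hAN : μ (A ∩ N) = 0) (h : ∀ x ∉ N, k₁ x ≤ k₂ x) :
    choquet μ k₁ A ≤ choquet μ k₂ A := by
  refine lintegral_mono fun t => ?_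
  have hsub : superlevel A k₁ t ⊆ superlevel A k₂ t ∪ (A ∩ N) := by
    rintro x ⟨hxA, hx⟩
    by_cases hxN : x ∈ N
    · exact .inr ⟨hxA, hxN⟩
    · exact .inl ⟨hxA, hx.trans (h x hxN)⟩
  calc μ (superlevel A k₁ t) ≤ μ (superlevel A k₂ t ∪ (A ∩ N)) :=
        hμ _ _ (measurableSet_superlevel hA hk₁ t)
          ((measurableSet_superlevel hA hk₂ t).union (hA.inter hN)) hsub
    _ ≤ μ (superlevel A k₂ t) :=
        (hμs.union_le (measurableSet_superlevel hA hk₂ t) (hA.inter hN)).trans (by simp [hAN])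

end SetFunction

section Subadditivity

variable {X : Type*} {μ : Set X → ℝ≥0∞} {A : Set X} {F G : X → ℝ≥0∞}

lemma superlevel_add_indicator (A : Set X) (F : X → ℝ≥0∞) (T : Set X) {c : ℝ} (hc : 0 ≤ c)
    (t : ℝ) :
    superlevel A (fun x => F x + T.indicator (fun _ => ENNReal.ofReal c) x) t =
      superlevel A F t ∪ (T ∩ superlevel A F (t - c)) := by
  ext x
  by_cases hx : x ∈ T
  · have : ENNReal.ofReal t ≤ F x → ENNReal.ofReal t ≤ F x + ENNReal.ofReal c :=
      fun h => h.trans le_self_add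
    simp only [superlevel, mem_union, mem_inter_iff, mem_ofPred_eq, indicator_of_mem hx,
      ENNReal.ofReal_sub t hc, tsub_le_iff_right]
    tauto
  · simp [superlevel, hx]

lemma superlevel_add_indicator_of_le (A : Set X) (F : X → ℝ≥0∞) (T : Set X) {c t : ℝ}
    (hc : 0 ≤ c) (ht : t ≤ c) :
    superlevel A (fun x => F x + T.indicator (fun _ => ENNReal.ofReal c) x) t =
      superlevel A F t ∪ (A ∩ T) := by
  rw [superlevel_add_indicator A F T hc, superlevel_of_nonpos A F (sub_nonpos.2 ht), inter_comm]

lemma min_le_sum_indicator_add (G : X → ℝ≥0∞) {η : ℝ} (hη : 0 < η) (N : ℕ) (x : X) :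
    min (G x) (ENNReal.ofReal (N * η)) ≤
      ∑ i ∈ Finset.range N,
        {y | ENNReal.ofReal ((i + 1) * η) ≤ G y}.indicator (fun _ => ENNReal.ofReal η) x +
      ENNReal.ofReal η := by
  set r := min (G x) (ENNReal.ofReal (N * η))
  have hr : r ≠ ∞ := ne_top_of_le_ne_top ENNReal.ofReal_ne_top (min_le_right _ _)
  -- `m` layers lie below `r`, and `r` exceeds them by less than one layer
  set m := ⌊r.toReal / η⌋₊
  have hm : (m : ℝ) * η ≤ r.toReal := (le_div_iff₀ hη).1 (Nat.floor_le (by positivity))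
  have hmN : m ≤ N := Nat.floor_le_of_le <| (div_le_iff₀ hη).2 <|
    ENNReal.toReal_le_of_le_ofReal (by positivity) (min_le_right _ _)
  have hlayer : ∀ i ∈ Finset.range m,
      {y | ENNReal.ofReal ((i + 1) * η) ≤ G y}.indicator (fun _ => ENNReal.ofReal η) x =
        ENNReal.ofReal η := by
    intro i hi
    refine indicator_of_mem ?_ _
    calc ENNReal.ofReal ((i + 1) * η) ≤ ENNReal.ofReal r.toReal := by
          gcongr
          exact le_trans (by gcongr; exact_mod_cast Finset.mem_range.1 hi) hm
      _ = r := ENNReal.ofReal_toReal hr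
      _ ≤ G x := min_le_left _ _
  calc r = ENNReal.ofReal r.toReal := (ENNReal.ofReal_toReal hr).symm
    _ ≤ ENNReal.ofReal (m * η + η) := by
        gcongr
        have := Nat.lt_floor_add_one (r.toReal / η)
        rw [div_lt_iff₀ hη] at this
        linarith
    _ = ∑ i ∈ Finset.range m,
          {y | ENNReal.ofReal ((i + 1) * η) ≤ G y}.indicator (fun _ => ENNReal.ofReal η) x +
        ENNReal.ofReal η := by
        rw [Finset.sum_congr rfl hlayer, Finset.sum_const, Finset.card_range, nsmul_eq_mul,
          ENNReal.ofReal_add (by positivity) hη.le, ENNReal.ofReal_mul (by positivity),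
          ENNReal.ofReal_natCast]
    _ ≤ _ := by gcongr

lemma superlevel_add_subset_layers (A : Set X) (F G : X → ℝ≥0∞) {η t : ℝ} (hη : 0 < η)
    (ht : 0 ≤ t) {N : ℕ} (hN : t + η ≤ N * η) :
    superlevel A (fun x => F x + G x) (t + η) ⊆
      superlevel A (fun x => F x + ∑ i ∈ Finset.range N,
        {y | ENNReal.ofReal ((i + 1) * η) ≤ G y}.indicator (fun _ => ENNReal.ofReal η) x) t := by
  rintro x ⟨hxA, hx⟩
  refine ⟨hxA, (ENNReal.add_le_add_iff_right (ENNReal.ofReal_ne_top (r := η))).1 ?_⟩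
  calc ENNReal.ofReal t + ENNReal.ofReal η
      ≤ min (F x + G x) (ENNReal.ofReal (N * η)) := by
        rw [← ENNReal.ofReal_add ht hη.le]
        exact le_min hx (ENNReal.ofReal_le_ofReal hN)
    _ ≤ F x + min (G x) (ENNReal.ofReal (N * η)) :=
        (min_le_min_left _ le_add_self).trans (min_add_add_left _ _ _).le
    _ ≤ _ := by
        rw [add_assoc]
        gcongr
        exact min_le_sum_indicator_add G hη N x

lemma superlevel_add_subset_union (A : Set X) (F G : X → ℝ≥0∞) {t : ℝ} (ht : 0 ≤ t) :
    superlevel A (fun x => F x + G x) t ⊆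
      superlevel A F (2⁻¹ * t) ∪ superlevel A G (2⁻¹ * t) := by
  rintro x ⟨hxA, hx⟩
  by_contra h
  simp only [superlevel, mem_union, mem_inter_iff, mem_ofPred_eq, hxA, true_and, not_or,
    not_le] at h
  have := ENNReal.add_lt_add h.1 h.2
  rw [← ENNReal.ofReal_add (by positivity) (by positivity),
    show 2⁻¹ * t + 2⁻¹ * t = t by ring] at this
  exact this.not_ge hx

variable [MeasurableSpace X]

lemma measure_superlevel_add_indicator_add_le (hμ : SubmodularOnMeasurable μ)
    (hA : MeasurableSet A) (hF : Measurable F) {T : Set X} (hT : MeasurableSet T) {c : ℝ}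
    (hc : 0 ≤ c) (t : ℝ) :
    μ (superlevel A (fun x => F x + T.indicator (fun _ => ENNReal.ofReal c) x) t) +
        μ (superlevel A F (t - c) ∪ (A ∩ T)) ≤
      μ (superlevel A F t ∪ (A ∩ T)) + μ (superlevel A F (t - c)) := by
  have h₁ : superlevel A F t ⊆ superlevel A F (t - c) := superlevel_antitone A F (by linarith)
  have h₂ : superlevel A F (t - c) ⊆ A := inter_subset_left
  have hinter : (superlevel A F t ∪ (A ∩ T)) ∩ superlevel A F (t - c) =
      superlevel A (fun x => F x + T.indicator (fun _ => ENNReal.ofReal c) x) t := by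
    rw [superlevel_add_indicator A F T hc]
    ext x
    have := @h₁ x
    have := @h₂ x
    simp only [mem_union, mem_inter_iff]
    tauto
  have hunion : superlevel A F t ∪ (A ∩ T) ∪ superlevel A F (t - c) =
      superlevel A F (t - c) ∪ (A ∩ T) := by
    rw [union_right_comm, union_eq_self_of_subset_left h₁]
  have key := hμ _ _ ((measurableSet_superlevel hA hF t).union (hA.inter hT))
    (measurableSet_superlevel hA hF (t - c))
  rwa [hinter, hunion] at key

lemma setLIntegral_Ioc_measure_superlevel_add_indicator_le (hμ : MonotoneOnMeasurable μ)
    (hμs : SubmodularOnMeasurable μ) (hA : MeasurableSet A) (hF : Measurable F) {T : Set X}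
    (hT : MeasurableSet T) {c : ℝ} (hc : 0 < c) (hFtop : choquet μ F A ≠ ∞)
    (hTtop : μ (A ∩ T) ≠ ∞) {s : ℝ} (hs : 0 ≤ s) :
    ∫⁻ t in Ioc 0 (s + c),
        μ (superlevel A (fun x => F x + T.indicator (fun _ => ENNReal.ofReal c) x) t) ≤
      ENNReal.ofReal c * (μ (superlevel A F s) + μ (A ∩ T)) + choquet μ F A := by
  set κ : ℝ → ℝ≥0∞ :=
    fun t => μ (superlevel A (fun x => F x + T.indicator (fun _ => ENNReal.ofReal c) x) t)
  set φ : ℝ → ℝ≥0∞ := fun t => μ (superlevel A F t ∪ (A ∩ T))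
  set ψ : ℝ → ℝ≥0∞ := fun t => μ (superlevel A F t)
  have hψ : Antitone ψ := antitone_measure_superlevel hμ hA hF
  have hφ : Antitone φ := fun s t hst =>
    hμ _ _ ((measurableSet_superlevel hA hF t).union (hA.inter hT))
      ((measurableSet_superlevel hA hF s).union (hA.inter hT))
      (union_subset_union_left _ (superlevel_antitone A F hst))
  have hφψ : ∀ t, φ t ≤ ψ t + μ (A ∩ T) := fun t =>
    hμs.union_le (measurableSet_superlevel hA hF t) (hA.inter hT)
  have hψs : ∫⁻ t in Ioc 0 s, ψ t ≤ choquet μ F A := lintegral_mono_set Ioc_subset_Ioi_self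
  have hφs : ∫⁻ t in Ioc 0 s, φ t ≠ ∞ := by
    refine ne_top_of_le_ne_top ?_ (lintegral_mono hφψ)
    rw [lintegral_add_right _ measurable_const, setLIntegral_const]
    exact ENNReal.add_ne_top.2 ⟨(hψs.trans_lt hFtop.lt_top).ne,
      ENNReal.mul_ne_top hTtop (by simp)⟩
  have htail : ∫⁻ t in Ioc s (s + c), φ t ≤ ENNReal.ofReal c * (ψ s + μ (A ∩ T)) := by
    calc ∫⁻ t in Ioc s (s + c), φ t ≤ ∫⁻ _ in Ioc s (s + c), (ψ s + μ (A ∩ T)) :=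
          setLIntegral_mono measurable_const fun t ht =>
            (hφψ t).trans (by gcongr; exact hψ ht.1.le)
      _ = ENNReal.ofReal c * (ψ s + μ (A ∩ T)) := by
          rw [setLIntegral_const, Real.volume_Ioc, add_sub_cancel_left, mul_comm]
  -- The submodular inequality integrated over `(c, s + c]` puts `∫_(0, s] φ` on both sides;
  -- being finite, it cancels.
  refine (ENNReal.add_le_add_iff_right hφs).1 ?_
  calc (∫⁻ t in Ioc 0 (s + c), κ t) + ∫⁻ t in Ioc 0 s, φ t
      = (∫⁻ t in Ioc 0 c, φ t) + ∫⁻ t in Ioc 0 s, (κ (t + c) + φ t) := by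
        rw [setLIntegral_Ioc_eq_add hc.le (by linarith),
          setLIntegral_congr_fun measurableSet_Ioc fun t ht =>
            congrArg μ (superlevel_add_indicator_of_le A F T hc.le ht.2),
          lintegral_add_right _ hφ.measurable, setLIntegral_Ioc_comp_add_right κ, zero_add,
          add_assoc]
    _ ≤ (∫⁻ t in Ioc 0 c, φ t) + ∫⁻ t in Ioc 0 s, (φ (t + c) + ψ t) := by
        gcongr _ + ?_
        refine lintegral_mono fun t => ?_
        simpa only [add_sub_cancel_right] using
          measure_superlevel_add_indicator_add_le hμs hA hF hT hc.le (t + c)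
    _ = (∫⁻ t in Ioc 0 s, φ t) + (∫⁻ t in Ioc s (s + c), φ t) + ∫⁻ t in Ioc 0 s, ψ t := by
        rw [lintegral_add_right _ hψ.measurable, setLIntegral_Ioc_comp_add_right φ, zero_add,
          ← add_assoc, ← setLIntegral_Ioc_eq_add hc.le (by linarith),
          setLIntegral_Ioc_eq_add hs (by linarith)]
    _ ≤ (∫⁻ t in Ioc 0 s, φ t) + ENNReal.ofReal c * (ψ s + μ (A ∩ T)) + choquet μ F A := by
        gcongr
    _ = ENNReal.ofReal c * (ψ s + μ (A ∩ T)) + choquet μ F A + ∫⁻ t in Ioc 0 s, φ t := by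
        ring

lemma choquet_add_indicator_le (hμ : MonotoneOnMeasurable μ) (hμs : SubmodularOnMeasurable μ)
    (hA : MeasurableSet A) (hF : Measurable F) {T : Set X} (hT : MeasurableSet T) {c : ℝ}
    (hc : 0 < c) :
    choquet μ (fun x => F x + T.indicator (fun _ => ENNReal.ofReal c) x) A ≤
      choquet μ F A + ENNReal.ofReal c * μ (A ∩ T) := by
  rcases eq_or_ne (choquet μ F A) ∞ with hFtop | hFtop
  · simp [hFtop]
  rcases eq_or_ne (μ (A ∩ T)) ∞ with hTtop | hTtop
  · simp [hTtop, hc]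
  have hlim : Tendsto
      (fun s => ENNReal.ofReal c * (μ (superlevel A F s) + μ (A ∩ T)) + choquet μ F A) atTop
      (𝓝 (choquet μ F A + ENNReal.ofReal c * μ (A ∩ T))) := by
    have := (ENNReal.Tendsto.const_mul (a := ENNReal.ofReal c)
      ((tendsto_measure_superlevel_atTop hμ hA hF hFtop).add_const (μ (A ∩ T)))
      (.inr ENNReal.ofReal_ne_top)).add_const (choquet μ F A)
    rwa [zero_add, add_comm] at this
  rw [choquet_eq_lintegral_superlevel, setLIntegral_Ioi_eq_iSup_Ioc]
  refine iSup_le fun n => ge_of_tendsto hlim ?_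
  filter_upwards [eventually_ge_atTop (n : ℝ)] with s hs
  exact (lintegral_mono_set (Ioc_subset_Ioc_right (by linarith))).trans
    (setLIntegral_Ioc_measure_superlevel_add_indicator_le hμ hμs hA hF hT hc hFtop hTtop
      ((Nat.cast_nonneg n).trans hs))

lemma choquet_add_sum_indicator_le (hμ : MonotoneOnMeasurable μ)
    (hμs : SubmodularOnMeasurable μ) (hA : MeasurableSet A) (hF : Measurable F) {c : ℝ}
    (hc : 0 < c) {T : ℕ → Set X} (hT : ∀ i, MeasurableSet (T i)) (N : ℕ) :
    choquet μ (fun x => F x + ∑ i ∈ Finset.range N, (T i).indicator (fun _ => ENNReal.ofReal c) x)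
        A ≤
      choquet μ F A + ∑ i ∈ Finset.range N, ENNReal.ofReal c * μ (A ∩ T i) := by
  induction N with
  | zero => simp
  | succ N ih =>
    have hFN : Measurable fun x =>
        F x + ∑ i ∈ Finset.range N, (T i).indicator (fun _ => ENNReal.ofReal c) x :=
      hF.add (Finset.measurable_sum _ fun i _ => measurable_const.indicator (hT i))
    simp only [Finset.sum_range_succ, ← add_assoc]
    exact (choquet_add_indicator_le hμ hμs hA hFN (hT N) hc).trans (by gcongr)

lemma sum_mul_measure_superlevel_le_choquet (hμ : MonotoneOnMeasurable μ)
    (hA : MeasurableSet A) (hG : Measurable G) {η : ℝ} (hη : 0 < η) (N : ℕ) :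
    ∑ i ∈ Finset.range N, ENNReal.ofReal η * μ (superlevel A G ((i + 1) * η)) ≤
      choquet μ G A := by
  rw [choquet_eq_lintegral_superlevel]
  refine le_trans ?_ (lintegral_mono_set (Ioc_subset_Ioi_self : Ioc (0 : ℝ) (N * η) ⊆ Ioi 0))
  induction N with
  | zero => simp
  | succ N ih =>
    push_cast
    rw [Finset.sum_range_succ, setLIntegral_Ioc_eq_add (b := N * η) (by positivity) (by linarith)]
    gcongr
    simpa [add_mul] using mul_measure_superlevel_le_setLIntegral hμ hA hG (N * η) ((N + 1) * η)

lemma setLIntegral_Ioi_measure_superlevel_add_le (hμ : MonotoneOnMeasurable μ)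
    (hμs : SubmodularOnMeasurable μ) (hA : MeasurableSet A) (hF : Measurable F)
    (hG : Measurable G) {η : ℝ} (hη : 0 < η) :
    ∫⁻ t in Ioi η, μ (superlevel A (fun x => F x + G x) t) ≤ choquet μ F A + choquet μ G A := by
  rw [← setLIntegral_Ioi_comp_add_right, setLIntegral_Ioi_eq_iSup_Ioc]
  refine iSup_le fun n => ?_
  obtain ⟨N, hN⟩ := exists_nat_ge ((n + η) / η)
  rw [div_le_iff₀ hη] at hN
  set T : ℕ → Set X := fun i => {x | ENNReal.ofReal ((i + 1) * η) ≤ G x}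
  set Gη : X → ℝ≥0∞ :=
    fun x => ∑ i ∈ Finset.range N, (T i).indicator (fun _ => ENNReal.ofReal η) x
  have hT : ∀ i, MeasurableSet (T i) := fun i => hG measurableSet_Ici
  have hGη : Measurable Gη :=
    Finset.measurable_sum _ fun i _ => measurable_const.indicator (hT i)
  calc ∫⁻ t in Ioc 0 (n : ℝ), μ (superlevel A (fun x => F x + G x) (t + η))
      ≤ ∫⁻ t in Ioc 0 (n : ℝ), μ (superlevel A (fun x => F x + Gη x) t) :=
        setLIntegral_mono' measurableSet_Ioc fun t ht =>
          hμ _ _ (measurableSet_superlevel hA (hF.add hG) _)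
            (measurableSet_superlevel hA (hF.add hGη) t)
            (superlevel_add_subset_layers A F G hη ht.1.le (by linarith [ht.2]))
    _ ≤ choquet μ (fun x => F x + Gη x) A := lintegral_mono_set Ioc_subset_Ioi_self
    _ ≤ choquet μ F A + ∑ i ∈ Finset.range N, ENNReal.ofReal η * μ (A ∩ T i) :=
        choquet_add_sum_indicator_le hμ hμs hA hF hη hT N
    _ ≤ choquet μ F A + choquet μ G A := by
        gcongr
        exact sum_mul_measure_superlevel_le_choquet hμ hA hG hη N

lemma tendsto_setLIntegral_Ioc_measure_superlevel_add (hμ : MonotoneOnMeasurable μ)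
    (hμs : SubmodularOnMeasurable μ) (hA : MeasurableSet A) (hF : Measurable F)
    (hG : Measurable G) (hFtop : choquet μ F A ≠ ∞) (hGtop : choquet μ G A ≠ ∞) :
    Tendsto (fun η => ∫⁻ t in Ioc 0 η, μ (superlevel A (fun x => F x + G x) t)) (𝓝[>] 0)
      (𝓝 0) := by
  set g : ℝ → ℝ≥0∞ := fun t => μ (superlevel A F (2⁻¹ * t)) + μ (superlevel A G (2⁻¹ * t))
  have hle : ∀ t ∈ Ioi (0 : ℝ), μ (superlevel A (fun x => F x + G x) t) ≤ g t := fun t ht =>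
    (hμ _ _ (measurableSet_superlevel hA (hF.add hG) t)
      ((measurableSet_superlevel hA hF _).union (measurableSet_superlevel hA hG _))
      (superlevel_add_subset_union A F G (le_of_lt ht))).trans
      (hμs.union_le (measurableSet_superlevel hA hF _) (measurableSet_superlevel hA hG _))
  have hF₂ : Measurable fun t => μ (superlevel A F (2⁻¹ * t)) :=
    (antitone_measure_superlevel hμ hA hF).measurable.comp (measurable_const_mul _)
  have hg : ∫⁻ t in Ioi 0, g t ≠ ∞ := by
    rw [lintegral_add_left hF₂,
      setLIntegral_Ioi_comp_mul_left (fun t => μ (superlevel A F t)) (by norm_num),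
      setLIntegral_Ioi_comp_mul_left (fun t => μ (superlevel A G t)) (by norm_num)]
    exact ENNReal.add_ne_top.2 ⟨ENNReal.mul_ne_top ENNReal.ofReal_ne_top hFtop,
      ENNReal.mul_ne_top ENNReal.ofReal_ne_top hGtop⟩
  have hvol : Tendsto (fun η : ℝ => (volume : Measure ℝ).restrict (Ioi 0) (Ioc 0 η)) (𝓝[>] 0)
      (𝓝 0) := by
    have : Tendsto ENNReal.ofReal (𝓝[>] 0) (𝓝 0) := by
      simpa using (ENNReal.continuous_ofReal.tendsto 0).mono_left nhdsWithin_le_nhds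
    refine this.congr fun η => ?_
    rw [Measure.restrict_apply measurableSet_Ioc, inter_eq_left.2 Ioc_subset_Ioi_self,
      Real.volume_Ioc, sub_zero]
  refine tendsto_of_tendsto_of_tendsto_of_le_of_le tendsto_const_nhds
    (tendsto_setLIntegral_zero hg hvol) (fun _ => zero_le) fun η => ?_
  rw [Measure.restrict_restrict measurableSet_Ioc, inter_eq_left.2 Ioc_subset_Ioi_self]
  exact setLIntegral_mono' measurableSet_Ioc fun t ht => hle t ht.1

theorem choquet_add_le (hμ : MonotoneOnMeasurable μ) (hμs : SubmodularOnMeasurable μ)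
    (hA : MeasurableSet A) (hF : Measurable F) (hG : Measurable G) :
    choquet μ (fun x => F x + G x) A ≤ choquet μ F A + choquet μ G A := by
  rcases eq_or_ne (choquet μ F A) ∞ with hFtop | hFtop
  · simp [hFtop]
  rcases eq_or_ne (choquet μ G A) ∞ with hGtop | hGtop
  · simp [hGtop]
  have hlim := (tendsto_setLIntegral_Ioc_measure_superlevel_add hμ hμs hA hF hG hFtop
    hGtop).add_const (choquet μ F A + choquet μ G A)
  rw [zero_add] at hlim
  refine ge_of_tendsto hlim ?_
  filter_upwards [self_mem_nhdsWithin] with η (hη : 0 < η)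
  rw [choquet_eq_lintegral_superlevel, setLIntegral_Ioi_eq_add hη.le]
  gcongr
  exact setLIntegral_Ioi_measure_superlevel_add_le hμ hμs hA hF hG hη

end Subadditivity

section Holder

lemma ENNReal.le_rpow_mul_rpow_of_forall_le_of_ne_zero {p q : ℝ} (hpq : p.HolderConjugate q)
    {C S T : ℝ≥0∞} (hS₀ : S ≠ 0) (hS : S ≠ ∞) (hT₀ : T ≠ 0) (hT : T ≠ ∞)
    (h : ∀ L : ℝ≥0∞, L ≠ 0 → L ≠ ∞ →
      C ≤ L ^ p / ENNReal.ofReal p * S + L⁻¹ ^ q / ENNReal.ofReal q * T) :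
    C ≤ S ^ (1 / p) * T ^ (1 / q) := by
  have hp := hpq.pos
  have hq := hpq.symm.pos
  -- the `L` that balances the two terms turns Young's inequality into an equality
  set L := (T / S) ^ (p + q)⁻¹
  have hTS : T / S ≠ ∞ := ENNReal.div_ne_top hT hS₀
  have hL₀ : L ≠ 0 := (ENNReal.rpow_pos (ENNReal.div_pos hT₀ hS) hTS).ne'
  have hL : L ≠ ∞ := ENNReal.rpow_ne_top_of_nonneg (by positivity) hTS
  have hSp : (S ^ (1 / p)) ^ p = S := by rw [one_div, ENNReal.rpow_inv_rpow hp.ne']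
  have hTq : (T ^ (1 / q)) ^ q = T := by rw [one_div, ENNReal.rpow_inv_rpow hq.ne']
  have hbalance : (L * S ^ (1 / p)) ^ p = (L⁻¹ * T ^ (1 / q)) ^ q := by
    have hLpq : L ^ q * (L ^ p * S) = T := by
      rw [← mul_assoc, ← ENNReal.rpow_add _ _ hL₀ hL, add_comm, ENNReal.rpow_inv_rpow
        (by positivity), ENNReal.div_mul_cancel hS₀ hS]
    rw [ENNReal.mul_rpow_of_nonneg _ _ hp.le, ENNReal.mul_rpow_of_nonneg _ _ hq.le, hSp, hTq,
      ← hLpq, ENNReal.inv_rpow, ENNReal.inv_mul_cancel_left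
        (ENNReal.rpow_pos (pos_iff_ne_zero.2 hL₀) hL).ne' (ENNReal.rpow_ne_top_of_nonneg hq.le hL)]
  calc C ≤ L ^ p / ENNReal.ofReal p * S + L⁻¹ ^ q / ENNReal.ofReal q * T := h L hL₀ hL
    _ = (L * S ^ (1 / p)) ^ p / ENNReal.ofReal p + (L⁻¹ * T ^ (1 / q)) ^ q / ENNReal.ofReal q := by
        rw [ENNReal.mul_rpow_of_nonneg _ _ hp.le, ENNReal.mul_rpow_of_nonneg _ _ hq.le, hSp, hTq,
          ENNReal.mul_div_right_comm, ENNReal.mul_div_right_comm]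
    _ = (L * S ^ (1 / p)) * (L⁻¹ * T ^ (1 / q)) :=
        ((ENNReal.young_inequality_eq_iff _ _ hpq).2 (.inr (.inr hbalance))).symm
    _ = S ^ (1 / p) * T ^ (1 / q) := by
        rw [mul_mul_mul_comm, ENNReal.mul_inv_cancel hL₀ hL, one_mul]

lemma ENNReal.le_rpow_mul_rpow_of_forall_le {p q : ℝ} (hpq : p.HolderConjugate q)
    {C S T : ℝ≥0∞} (hS : S ≠ ∞) (hT : T ≠ ∞)
    (h : ∀ L : ℝ≥0∞, L ≠ 0 → L ≠ ∞ →
      C ≤ L ^ p / ENNReal.ofReal p * S + L⁻¹ ^ q / ENNReal.ofReal q * T) :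
    C ≤ S ^ (1 / p) * T ^ (1 / q) := by
  have hp := hpq.pos
  have hq := hpq.symm.pos
  have hcont : ∀ (U : ℝ≥0∞) (r : ℝ),
      Tendsto (fun δ : ℝ≥0∞ => (U + δ) ^ r) (𝓝[>] 0) (𝓝 (U ^ r)) := fun U r =>
    (ENNReal.continuous_rpow_const.tendsto U).comp <| by
      simpa using ((tendsto_const_nhds (x := U)).add tendsto_id).mono_left
        (nhdsWithin_le_nhds (a := (0 : ℝ≥0∞)) (s := Ioi 0))
  have hlim := ENNReal.Tendsto.mul (hcont S (1 / p))
    (.inr (ENNReal.rpow_ne_top_of_nonneg (by positivity) hT)) (hcont T (1 / q))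
    (.inr (ENNReal.rpow_ne_top_of_nonneg (by positivity) hS))
  refine ge_of_tendsto hlim ?_
  filter_upwards [self_mem_nhdsWithin, nhdsWithin_le_nhds (Iio_mem_nhds ENNReal.zero_lt_top)]
    with δ (hδ₀ : 0 < δ) (hδ : δ < ∞)
  refine ENNReal.le_rpow_mul_rpow_of_forall_le_of_ne_zero hpq (by simp [hδ₀.ne'])
    (ENNReal.add_ne_top.2 ⟨hS, hδ.ne⟩) (by simp [hδ₀.ne']) (ENNReal.add_ne_top.2 ⟨hT, hδ.ne⟩)
    fun L hL₀ hL => (h L hL₀ hL).trans ?_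
  gcongr <;> exact le_self_add

theorem choquet_mul_le_rpow_mul_rpow {X : Type*} [MeasurableSpace X] {μ : Set X → ℝ≥0∞}
    {A : Set X} (hμ : MonotoneOnMeasurable μ) (hμs : SubmodularOnMeasurable μ)
    (hA : MeasurableSet A) {u v : X → ℝ≥0∞} (hu : Measurable u) (hv : Measurable v) {p q : ℝ}
    (hpq : p.HolderConjugate q) (hup : choquet μ (fun x => u x ^ p) A ≠ ∞)
    (hvq : choquet μ (fun x => v x ^ q) A ≠ ∞) :
    choquet μ (fun x => u x * v x) A ≤
      choquet μ (fun x => u x ^ p) A ^ (1 / p) * choquet μ (fun x => v x ^ q) A ^ (1 / q) := by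
  refine ENNReal.le_rpow_mul_rpow_of_forall_le hpq hup hvq fun L hL₀ hL => ?_
  have hcoeff : ∀ {M : ℝ≥0∞} {r : ℝ}, 0 < r → M ≠ 0 → M ≠ ∞ →
      M ^ r / ENNReal.ofReal r ≠ 0 ∧ M ^ r / ENNReal.ofReal r ≠ ∞ := fun hr hM₀ hM =>
    ⟨ENNReal.div_ne_zero.2 ⟨(ENNReal.rpow_pos (pos_iff_ne_zero.2 hM₀) hM).ne',
      ENNReal.ofReal_ne_top⟩,
     ENNReal.div_ne_top (ENNReal.rpow_ne_top_of_nonneg hr.le hM) (by simp [hr])⟩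
  obtain ⟨hp₀, hp⟩ := hcoeff hpq.pos hL₀ hL
  obtain ⟨hq₀, hq⟩ := hcoeff hpq.symm.pos (ENNReal.inv_ne_zero.2 hL) (ENNReal.inv_ne_top.2 hL₀)
  calc choquet μ (fun x => u x * v x) A
      ≤ choquet μ (fun x => L ^ p / ENNReal.ofReal p * u x ^ p +
          L⁻¹ ^ q / ENNReal.ofReal q * v x ^ q) A := by
        refine choquet_mono hμ hA (hu.mul hv) (by fun_prop) fun x => ?_
        calc u x * v x = (L * u x) * (L⁻¹ * v x) := by
              rw [mul_mul_mul_comm, ENNReal.mul_inv_cancel hL₀ hL, one_mul]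
          _ ≤ (L * u x) ^ p / ENNReal.ofReal p + (L⁻¹ * v x) ^ q / ENNReal.ofReal q :=
              ENNReal.young_inequality _ _ hpq
          _ = _ := by
              rw [ENNReal.mul_rpow_of_nonneg _ _ hpq.pos.le,
                ENNReal.mul_rpow_of_nonneg _ _ hpq.symm.pos.le, ENNReal.mul_div_right_comm,
                ENNReal.mul_div_right_comm]
    _ ≤ choquet μ (fun x => L ^ p / ENNReal.ofReal p * u x ^ p) A +
          choquet μ (fun x => L⁻¹ ^ q / ENNReal.ofReal q * v x ^ q) A :=
        choquet_add_le hμ hμs hA (by fun_prop) (by fun_prop)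
    _ = _ := by rw [choquet_const_mul hp₀ hp, choquet_const_mul hq₀ hq]

theorem choquet_le_rpow_mul_rpow_of_weight {X : Type*} [MeasurableSpace X]
    {μ : Set X → ℝ≥0∞} {A : Set X} (hμ : MonotoneOnMeasurable μ)
    (hμs : SubmodularOnMeasurable μ) (hA : MeasurableSet A) {f w : X → ℝ≥0∞}
    (hf : Measurable f) (hw : Measurable w) (hw_top : ∀ x, w x ≠ ∞) {p q : ℝ}
    (hpq : p.HolderConjugate q) (hS : choquet μ (fun x => w x * f x ^ p) A ≠ ∞)
    (hT : choquet μ (fun x => w x ^ (-(q - 1))) A ≠ ∞) :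
    choquet μ f A ≤
      choquet μ (fun x => w x * f x ^ p) A ^ (1 / p) *
        choquet μ (fun x => w x ^ (-(q - 1))) A ^ (1 / q) := by
  have hp := hpq.pos
  have hu : (fun x => (w x ^ (1 / p) * f x) ^ p) = fun x => w x * f x ^ p := by
    ext x
    rw [ENNReal.mul_rpow_of_nonneg _ _ hp.le, one_div, ENNReal.rpow_inv_rpow hp.ne']
  have hv : (fun x => (w x ^ (-(1 / p))) ^ q) = fun x => w x ^ (-(q - 1)) := by
    ext x
    rw [← ENNReal.rpow_mul, ← hpq.symm.div_conj_eq_sub_one]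
    ring_nf
  have hZ : μ (A ∩ w ⁻¹' {0}) = 0 :=
    measure_inter_eq_zero_of_choquet_ne_top hμ hA (by fun_prop) hT
      (hw (measurableSet_singleton 0)) fun x hx => by
        simp [show w x = 0 from hx, ENNReal.zero_rpow_of_neg, hpq.symm.lt]
  calc choquet μ f A ≤ choquet μ (fun x => (w x ^ (1 / p) * f x) * w x ^ (-(1 / p))) A := by
        refine choquet_le_of_le_off_null hμ hμs hA hf (by fun_prop)
          (hw (measurableSet_singleton 0)) hZ fun x hx => le_of_eq ?_
        rw [mul_right_comm, ← ENNReal.rpow_add _ _ hx (hw_top x), add_neg_cancel,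
          ENNReal.rpow_zero, one_mul]
    _ ≤ choquet μ (fun x => (w x ^ (1 / p) * f x) ^ p) A ^ (1 / p) *
          choquet μ (fun x => (w x ^ (-(1 / p))) ^ q) A ^ (1 / q) :=
        choquet_mul_le_rpow_mul_rpow hμ hμs hA (by fun_prop) (by fun_prop) hpq
          (by rwa [hu]) (by rwa [hv])
    _ = _ := by rw [hu, hv]

end Holder

theorem carlson_choquet_submodular_general {X : Type*} [MeasurableSpace X]
    -- μ : F → [0,∞] is a submodular monotone measure
    (μ : Set X → ℝ≥0∞)
    (hμmono : ∀ A B : Set X, MeasurableSet A → MeasurableSet B → A ⊆ B → μ A ≤ μ B)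
    (hsubmod : ∀ A B : Set X, MeasurableSet A → MeasurableSet B →
      μ (A ∩ B) + μ (A ∪ B) ≤ μ A + μ B)
    -- p > 1, 1/p + 1/q = 1
    (p q : ℝ) (hp : 1 < p) (hpq : 1/p + 1/q = 1)
    (A : Set X) (hA : MeasurableSet A)
    -- f, g, h : X → [0,∞) measurable
    (f g h : X → ℝ≥0) (hf : Measurable f) (hg : Measurable g) (hh : Measurable h)
    -- a = (C)∫_A g f^p dμ, b = (C)∫_A h f^p dμ, with 0 < a < ∞ and 0 < b < ∞
    (a b : ℝ≥0∞)
    (ha : a = choquet μ (fun x => (g x : ℝ≥0∞) * (f x : ℝ≥0∞) ^ p) A)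
    (hb : b = choquet μ (fun x => (h x : ℝ≥0∞) * (f x : ℝ≥0∞) ^ p) A)
    (ha0 : 0 < a) (haf : a < ∞) (hb0 : 0 < b) (hbf : b < ∞) :
    choquet μ (fun x => (f x : ℝ≥0∞)) A ≤
      (2 : ℝ≥0∞) ^ (1/p) * (a * b) ^ (1/p) *
        (choquet μ (fun x => (b * (g x : ℝ≥0∞) + a * (h x : ℝ≥0∞)) ^ (-(q-1))) A)
          ^ (1/q) := by
  have hpq' : p.HolderConjugate q := Real.holderConjugate_iff.2 ⟨hp, by simpa [one_div] using hpq⟩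
  set w : X → ℝ≥0∞ := fun x => b * g x + a * h x
  set T := choquet μ (fun x => w x ^ (-(q - 1))) A
  rcases eq_or_ne T ∞ with hT | hT
  · rw [hT, ENNReal.top_rpow_of_pos (by simpa using hpq'.symm.pos), ENNReal.mul_top]
    · exact le_top
    · exact mul_ne_zero (by simp) (by simp [ha0.ne', hb0.ne', hpq'.pos.le])
  have hS : choquet μ (fun x => w x * (f x : ℝ≥0∞) ^ p) A ≤ 2 * (a * b) :=
    calc choquet μ (fun x => w x * (f x : ℝ≥0∞) ^ p) A
        = choquet μ (fun x => b * (g x * (f x : ℝ≥0∞) ^ p) + a * (h x * (f x : ℝ≥0∞) ^ p)) A := by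
          simp only [w, add_mul, mul_assoc]
      _ ≤ choquet μ (fun x => b * (g x * (f x : ℝ≥0∞) ^ p)) A +
            choquet μ (fun x => a * (h x * (f x : ℝ≥0∞) ^ p)) A :=
          choquet_add_le hμmono hsubmod hA (by fun_prop) (by fun_prop)
      _ = 2 * (a * b) := by
          rw [choquet_const_mul hb0.ne' hbf.ne, choquet_const_mul ha0.ne' haf.ne, ← ha, ← hb]
          ring
  have hw_top : ∀ x, w x ≠ ∞ := fun x => ENNReal.add_ne_top.2
    ⟨ENNReal.mul_ne_top hbf.ne ENNReal.coe_ne_top, ENNReal.mul_ne_top haf.ne ENNReal.coe_ne_top⟩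
  calc choquet μ (fun x => (f x : ℝ≥0∞)) A
      ≤ choquet μ (fun x => w x * (f x : ℝ≥0∞) ^ p) A ^ (1 / p) * T ^ (1 / q) :=
        choquet_le_rpow_mul_rpow_of_weight hμmono hsubmod hA (by fun_prop) (by fun_prop) hw_top
          hpq' (ne_top_of_le_ne_top (ENNReal.mul_ne_top ENNReal.ofNat_ne_top
            (ENNReal.mul_ne_top haf.ne hbf.ne)) hS) hT
    _ ≤ (2 * (a * b)) ^ (1 / p) * T ^ (1 / q) := by gcongr
    _ = 2 ^ (1 / p) * (a * b) ^ (1 / p) * T ^ (1 / q) := by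
        rw [ENNReal.mul_rpow_of_nonneg _ _ (by positivity)]

/-- Carlson type inequality for the Choquet integral with respect to a
submodular monotone measure:
`(C)∫_A f dμ ≤ 2^{1/p} (ab)^{1/p} ((C)∫_A (bg + ah)^{−(q−1)} dμ)^{1/q}`
where `a = (C)∫_A g f^p dμ` and `b = (C)∫_A h f^p dμ`. -/
theorem carlson_choquet_submodular {X : Type*} [MeasurableSpace X]
    -- μ : F → [0,∞] is a submodular monotone measure
    (μ : Set X → ℝ≥0∞)
    (hμ0 : μ ∅ = 0) (hμX : 0 < μ Set.univ)
    (hμmono : ∀ A B : Set X, MeasurableSet A → MeasurableSet B → A ⊆ B → μ A ≤ μ B)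
    (hsubmod : ∀ A B : Set X, MeasurableSet A → MeasurableSet B →
      μ (A ∩ B) + μ (A ∪ B) ≤ μ A + μ B)
    -- p > 1, 1/p + 1/q = 1
    (p q : ℝ) (hp : 1 < p) (hpq : 1/p + 1/q = 1)
    (A : Set X) (hA : MeasurableSet A)
    -- f, g, h : X → [0,∞) measurable
    (f g h : X → ℝ≥0) (hf : Measurable f) (hg : Measurable g) (hh : Measurable h)
    -- a = (C)∫_A g f^p dμ, b = (C)∫_A h f^p dμ, with 0 < a < ∞ and 0 < b < ∞
    (a b : ℝ≥0∞)
    (ha : a = choquet μ (fun x => (g x : ℝ≥0∞) * (f x : ℝ≥0∞) ^ p) A)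
    (hb : b = choquet μ (fun x => (h x : ℝ≥0∞) * (f x : ℝ≥0∞) ^ p) A)
    (ha0 : 0 < a) (haf : a < ∞) (hb0 : 0 < b) (hbf : b < ∞) :
    choquet μ (fun x => (f x : ℝ≥0∞)) A ≤
      (2 : ℝ≥0∞) ^ (1/p) * (a * b) ^ (1/p) *
        (choquet μ (fun x => (b * (g x : ℝ≥0∞) + a * (h x : ℝ≥0∞)) ^ (-(q-1))) A)
          ^ (1/q) :=
  carlson_choquet_submodular_general μ hμmono hsubmod p q hp hpq A hA f g h hf hg hh a b ha hb ha0
    haf hb0 hbf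
end
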